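/- arXiv:math/0603270 — 8 statements merged into one kernel-verified Lean document; each statement's English description precedes it below -/
import Mathlib

section
/- Let $k$ be an algebraically closed field and $S$ a finite nonempty set of nonzero elements of $k$ such that for all $x, y \in S$ there exist $r \geq 1$, a sequence $x = x_0, x_1, \ldots, x_r = y$ in $S$, and nonzero integers $n_1, \ldots, n_r$ and $m_0, \ldots, m_{r-1}$ with $x_{i-1}^{m_{i-1}} = x_i^{n_i}$ for all $1 \leq i \leq r$. Then there exists $q \in k$ such that every $x \in S$ can be written as $x = \omega q^L$ for some root of unity $\omega \in k$ and some nonzero integer $L$. -/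
private lemma chain_pow {K : Type*} [Field K] : ∀ (r : ℕ) (c : Fin (r+1) → K) (n m : Fin r → ℤ),
    (∀ i : Fin r, n i ≠ 0 ∧ m i ≠ 0 ∧ c i.castSucc ^ m i = c i.succ ^ n i) →
    ∃ M N : ℤ, M ≠ 0 ∧ N ≠ 0 ∧ c 0 ^ M = c (Fin.last r) ^ N := by
  intro r
  induction r with
  | zero =>
    intro c n m _
    exact ⟨1, 1, one_ne_zero, one_ne_zero, rfl⟩
  | succ r ih =>
    intro c n m h
    obtain ⟨M, N, hM, hN, heq⟩ := ih (fun i => c i.succ) (fun i => n i.succ) (fun i => m i.succ)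
      (fun i => by
        obtain ⟨h1, h2, h3⟩ := h i.succ
        refine ⟨h1, h2, ?_⟩
        simpa only [Fin.succ_castSucc] using h3)
    obtain ⟨hn0, hm0, h0⟩ := h 0
    refine ⟨m 0 * M, N * n 0, mul_ne_zero hm0 hM, mul_ne_zero hN hn0, ?_⟩
    have hlast : (Fin.last r).succ = Fin.last (r+1) := Fin.succ_last r
    calc c 0 ^ (m 0 * M) = (c (0 : Fin (r+1)).castSucc ^ m 0) ^ M := by
          rw [zpow_mul]; rfl
      _ = (c (0 : Fin (r+1)).succ ^ n 0) ^ M := by rw [h0]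
      _ = (c (0 : Fin (r+1)).succ ^ M) ^ n 0 := by
          rw [← zpow_mul, ← zpow_mul, mul_comm]
      _ = (c (Fin.last (r+1)) ^ N) ^ n 0 := by
          rw [show c (0 : Fin (r+1)).succ ^ M = c (Fin.last (r+1)) ^ N from by
            simpa [hlast] using heq]
      _ = c (Fin.last (r+1)) ^ (N * n 0) := by rw [← zpow_mul]

/-- Lemma on writing elements of a "power-connected" finite set as
root of unity times a power of a common `q`. -/
theorem stmt_0 (K : Type*) [Field K] [IsAlgClosed K]
    (S : Finset K) (hS : S.Nonempty) (h0 : ∀ x ∈ S, x ≠ 0)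
    (hconn : ∀ x ∈ S, ∀ y ∈ S, ∃ r : ℕ, 0 < r ∧ ∃ (c : Fin (r + 1) → K)
      (n m : Fin r → ℤ),
      c 0 = x ∧ c (Fin.last r) = y ∧ (∀ i, c i ∈ S) ∧
      ∀ i : Fin r, n i ≠ 0 ∧ m i ≠ 0 ∧ c i.castSucc ^ m i = c i.succ ^ n i) :
    ∃ q : K, ∀ x ∈ S, ∃ (ω : K) (L : ℤ),
      (∃ n : ℕ, 0 < n ∧ ω ^ n = 1) ∧ L ≠ 0 ∧ x = ω * q ^ L := by
  obtain ⟨x₀, hx₀⟩ := hS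
  have key : ∀ x ∈ S, ∃ M N : ℤ, M ≠ 0 ∧ N ≠ 0 ∧ x ^ M = x₀ ^ N := by
    intro x hx
    obtain ⟨r, hr, c, n, m, hc0, hcl, hcS, hrel⟩ := hconn x hx x₀ hx₀
    obtain ⟨M, N, hM, hN, heq⟩ := chain_pow r c n m hrel
    exact ⟨M, N, hM, hN, by rw [hc0, hcl] at heq; exact heq⟩
  choose M N hM hN hMN using key
  set D : ℕ := ∏ x ∈ S.attach, (M x x.2).natAbs with hDdef
  have hDpos : 0 < D := Finset.prod_pos (fun x _ => Int.natAbs_pos.2 (hM x x.2))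
  obtain ⟨q, hq⟩ := IsAlgClosed.exists_pow_nat_eq x₀ hDpos
  have hqne : q ≠ 0 := by
    intro h
    exact h0 x₀ hx₀ (by rw [← hq, h, zero_pow hDpos.ne'])
  refine ⟨q, fun x hx => ?_⟩
  have hxne : x ≠ 0 := h0 x hx
  have hdvd : (M x hx) ∣ (D : ℤ) := by
    have h1 : (M x hx).natAbs ∣ D := Finset.dvd_prod_of_mem _ (Finset.mem_attach S ⟨x, hx⟩)
    exact Int.natAbs_dvd.1 (Int.natCast_dvd_natCast.2 h1)
  obtain ⟨t, ht⟩ := hdvd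
  have htne : t ≠ 0 := by
    rintro rfl
    rw [mul_zero] at ht
    exact hDpos.ne' (by exact_mod_cast ht)
  set L : ℤ := N x hx * t with hLdef
  have hLne : L ≠ 0 := mul_ne_zero (hN x hx) htne
  have hqD : (q : K) ^ (D : ℤ) = x₀ := by rw [zpow_natCast, hq]
  have hxD : x ^ (D : ℤ) = q ^ ((D : ℤ) * L) := by
    calc x ^ (D : ℤ) = x ^ (M x hx * t) := by rw [← ht]
      _ = (x ^ M x hx) ^ t := by rw [zpow_mul]
      _ = (x₀ ^ N x hx) ^ t := by rw [hMN]
      _ = (q ^ (D : ℤ)) ^ (N x hx * t) := by rw [hqD, ← zpow_mul, zpow_mul]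
      _ = q ^ ((D : ℤ) * L) := by rw [← zpow_mul]
  refine ⟨x / q ^ L, L, ⟨D, hDpos, ?_⟩, hLne, ?_⟩
  · rw [div_pow, div_eq_one_iff_eq (pow_ne_zero _ (zpow_ne_zero _ hqne))]
    rw [← zpow_natCast x D, hxD, ← zpow_natCast (q ^ L) D, ← zpow_mul, mul_comm]
  · rw [div_mul_cancel₀ _ (zpow_ne_zero _ hqne)]
end

section
/- Let $k$ be an algebraically closed field, $(a_{ij}) \in M_\theta(\mathbb{Z})$ a nonzero matrix in which all pairs of indices $1 \leq i, j \leq \theta$ are connected, and $q_1, \ldots, q_\theta \in k$ nonzero elements satisfying $q_i^{a_{ij}} = q_j^{a_{ji}}$ for all $i, j$. If at least one $q_i$ is not a root of unity, then none of $q_1, \ldots, q_\theta$ is a root of unity. -/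
/-- If `x ^ m = 1` for a nonzero integer `m`, then `x` is a root of unity. -/
lemma zpow_root_of_unity {K : Type*} [Field K] (x : K) (m : ℤ) (hm : m ≠ 0)
    (h : x ^ m = 1) : ∃ n : ℕ, 0 < n ∧ x ^ n = 1 := by
  refine ⟨m.natAbs, Int.natAbs_pos.mpr hm, ?_⟩
  rcases Int.natAbs_eq m with he | he
  · rw [← zpow_natCast, ← he, h]
  · rw [← zpow_natCast]
    have : (m.natAbs : ℤ) = -m := by omega
    rw [this, zpow_neg, h, inv_one]

/-- If the integer matrix `a` is nonzero, all indices are connected,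
`q i ^ a i j = q j ^ a j i`, and some `q i` is not a root of unity, then no `q i`
is a root of unity. -/
theorem stmt_1 (K : Type*) [Field K] [IsAlgClosed K] (θ : ℕ)
    (a : Fin θ → Fin θ → ℤ) (ha : a ≠ 0)
    (hconn : ∀ i j : Fin θ, ∃ (t : ℕ) (c : Fin (t + 2) → Fin θ),
      c 0 = i ∧ c (Fin.last (t + 1)) = j ∧
      ∀ l : Fin (t + 1), a (c l.castSucc) (c l.succ) ≠ 0)
    (q : Fin θ → K) (hq : ∀ i, q i ≠ 0)
    (hsym : ∀ i j, q i ^ a i j = q j ^ a j i)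
    (hex : ∃ i, ¬ ∃ n : ℕ, 0 < n ∧ q i ^ n = 1) :
    ∀ i, ¬ ∃ n : ℕ, 0 < n ∧ q i ^ n = 1 := by
  -- Key step: if a i j ≠ 0 and q j is a root of unity, so is q i.
  have step : ∀ i j : Fin θ, a i j ≠ 0 → (∃ n : ℕ, 0 < n ∧ q j ^ n = 1) →
      (∃ n : ℕ, 0 < n ∧ q i ^ n = 1) := by
    intro i j hij ⟨n, hn, h1⟩
    apply zpow_root_of_unity (q i) (a i j * n)
    · exact mul_ne_zero hij (by exact_mod_cast hn.ne')
    · rw [zpow_mul, hsym i j, ← zpow_mul, mul_comm, zpow_mul, zpow_natCast, h1,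
        one_zpow]
  -- Propagate along a path.
  have main : ∀ (t : ℕ) (c : Fin (t + 2) → Fin θ),
      (∀ l : Fin (t + 1), a (c l.castSucc) (c l.succ) ≠ 0) →
      (∃ n : ℕ, 0 < n ∧ q (c (Fin.last (t + 1))) ^ n = 1) →
      (∃ n : ℕ, 0 < n ∧ q (c 0) ^ n = 1) := by
    intro t
    induction t with
    | zero =>
      intro c hc hru
      exact step _ _ (by simpa using hc 0) (by simpa using hru)
    | succ t ih =>
      intro c hc hru
      have h2 : ∃ n : ℕ, 0 < n ∧ q (c (Fin.castSucc (Fin.last (t + 1)))) ^ n = 1 :=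
        step _ _ (hc (Fin.last (t + 1))) (by simpa [Fin.succ_last] using hru)
      have := ih (c ∘ Fin.castSucc) (fun l => by
        have := hc l.castSucc
        rw [Fin.succ_castSucc] at this; exact this) (by simpa using h2)
      simpa using this
  intro i hi
  obtain ⟨i₀, hi₀⟩ := hex
  obtain ⟨t, c, hc0, hcl, hce⟩ := hconn i₀ i
  exact hi₀ (hc0 ▸ main t c hce (hcl ▸ hi))
end

section
/- Let $k$ be an algebraically closed field, $(a_{ij}) \in M_\theta(\mathbb{Z})$ a nonzero matrix in which all pairs of indices are connected, and $q_1, \ldots, q_\theta \in k$ nonzero elements, none of which is a root of unity, satisfying $q_i^{a_{ij}} = q_j^{a_{ji}}$ for all $i, j$. Suppose there exist roots of unity $\omega_1, \ldots, \omega_\theta \in k$, an element $q \in k$, and nonzero integers $d_1, \ldots, d_\theta$ with $q_i = \omega_i q^{d_i}$ for all $i$. Then $d_i a_{ij} = d_j a_{ji}$ for all $1 \leq i, j \leq \theta$. -/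
/-- "`x` is a root of unity" predicate used in the statement. -/
private def IsRU {K : Type*} [Field K] (x : K) : Prop := ∃ n : ℕ, 0 < n ∧ x ^ n = 1

private lemma isRU_mul {K : Type*} [Field K] {x y : K} (hx : IsRU x) (hy : IsRU y) :
    IsRU (x * y) := by
  obtain ⟨n, hn, hxn⟩ := hx
  obtain ⟨m, hm, hym⟩ := hy
  refine ⟨n * m, Nat.mul_pos hn hm, ?_⟩
  rw [mul_pow, pow_mul, hxn, one_pow, mul_comm n m, pow_mul, hym, one_pow, one_mul]

private lemma isRU_inv {K : Type*} [Field K] {x : K} (hx : IsRU x) : IsRU x⁻¹ := by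
  obtain ⟨n, hn, hxn⟩ := hx
  exact ⟨n, hn, by rw [inv_pow, hxn, inv_one]⟩

private lemma isRU_zpow {K : Type*} [Field K] {x : K} (hx : IsRU x) (z : ℤ) :
    IsRU (x ^ z) := by
  obtain ⟨n, hn, hxn⟩ := hx
  refine ⟨n, hn, ?_⟩
  rw [← zpow_natCast (x ^ z), ← zpow_mul, mul_comm, zpow_mul, zpow_natCast, hxn, one_zpow]

private lemma isRU_of_zpow {K : Type*} [Field K] {x : K} {m : ℤ} (hm : m ≠ 0)
    (h : IsRU (x ^ m)) : IsRU x := by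
  obtain ⟨n, hn, hxn⟩ := h
  rw [← zpow_natCast (x ^ m), ← zpow_mul] at hxn
  have habs : x ^ ((m * n).natAbs : ℤ) = 1 := by
    rcases Int.natAbs_eq (m * n) with h' | h'
    · rw [← h', hxn]
    · rw [← neg_neg ((m * n).natAbs : ℤ), ← h', zpow_neg, hxn, inv_one]
  refine ⟨(m * n).natAbs, ?_, by rw [← zpow_natCast x, habs]⟩
  exact Int.natAbs_pos.mpr (mul_ne_zero hm (by exact_mod_cast hn.ne'))

/-- Under the connectivity and symmetry hypotheses, if
`q i = ω i * q ^ d i` with `ω i` roots of unity and `d i` nonzero integers,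
then `d i * a i j = d j * a j i`. -/
theorem stmt_2 (K : Type*) [Field K] [IsAlgClosed K] (θ : ℕ)
    (a : Fin θ → Fin θ → ℤ) (ha : a ≠ 0)
    (hconn : ∀ i j : Fin θ, ∃ (t : ℕ) (c : Fin (t + 2) → Fin θ),
      c 0 = i ∧ c (Fin.last (t + 1)) = j ∧
      ∀ l : Fin (t + 1), a (c l.castSucc) (c l.succ) ≠ 0)
    (q : Fin θ → K) (hq : ∀ i, q i ≠ 0)
    (hroot : ∀ i, ¬ ∃ n : ℕ, 0 < n ∧ q i ^ n = 1)
    (hsym : ∀ i j, q i ^ a i j = q j ^ a j i)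
    (ω : Fin θ → K) (hω : ∀ i, ∃ n : ℕ, 0 < n ∧ ω i ^ n = 1)
    (q₀ : K) (d : Fin θ → ℤ) (hd : ∀ i, d i ≠ 0)
    (hfact : ∀ i, q i = ω i * q₀ ^ d i) :
    ∀ i j, d i * a i j = d j * a j i := by
  intro i j
  by_contra hne
  have hm : d i * a i j - d j * a j i ≠ 0 := sub_ne_zero.mpr hne
  have hω0 : ∀ k, ω k ≠ 0 := by
    intro k hk
    obtain ⟨n, hn, hωn⟩ := hω k
    rw [hk, zero_pow hn.ne'] at hωn
    exact zero_ne_one hωn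
  have hq₀ : q₀ ≠ 0 := by
    intro h0
    apply hq i
    rw [hfact i, h0, zero_zpow _ (hd i), mul_zero]
  have h1 := hsym i j
  rw [hfact i, hfact j, mul_zpow, mul_zpow, ← zpow_mul, ← zpow_mul] at h1
  have key : q₀ ^ (d i * a i j - d j * a j i) = ω j ^ (a j i) * (ω i ^ (a i j))⁻¹ := by
    rw [zpow_sub₀ hq₀]
    field_simp
    rw [eq_div_iff (zpow_ne_zero _ (hω0 i))]
    linear_combination h1
  have hru : IsRU (q₀ ^ (d i * a i j - d j * a j i)) := by
    rw [key]
    exact isRU_mul (isRU_zpow (hω j) _) (isRU_inv (isRU_zpow (hω i) _))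
  have hq₀ru : IsRU q₀ := isRU_of_zpow hm hru
  apply hroot i
  have : IsRU (q i) := by
    rw [hfact i]
    exact isRU_mul (hω i) (isRU_zpow hq₀ru _)
  exact this
end

section
/- Let $G$ be an abelian group, $\chi_1, \ldots, \chi_\theta$ characters of $G$ with values in $k^\times$, and $g_1, \ldots, g_\theta \in G$. Suppose $q \in k$ is not a root of unity, $d_1, \ldots, d_\theta$ are nonzero integers, $\omega_1, \ldots, \omega_\theta$ are roots of unity with $\chi_i(g_i) = \omega_i q^{d_i}$, the matrix $(a_{ij}) \in M_\theta(\mathbb{Z})$ satisfies $a_{ii} = 2$, $d_i a_{ij} = d_j a_{ji}$, and $\chi_j(g_i)\chi_i(g_j) = \chi_i(g_i)^{a_{ij}}$ for all $i, j$. If integers $k_1, \ldots, k_\theta$ satisfy $\chi_1^{k_1} \cdots \chi_\theta^{k_\theta} = 1$, then $Q(k_1, \ldots, k_\theta) = 0$, where $Q(x_1, \ldots, x_\theta) = \sum_{i=1}^\theta 2 x_i^2 d_i + \sum_{1 \leq i < j \leq \theta} 2 x_i x_j d_i a_{ij}$. -/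
private lemma my_zpow_sum {M : Type*} [CommGroup M] {ι : Type*} (x : M) (s : Finset ι)
    (f : ι → ℤ) : x ^ (∑ i ∈ s, f i) = ∏ i ∈ s, x ^ f i := by
  induction s using Finset.cons_induction with
  | empty => simp
  | cons a s h ih => rw [Finset.sum_cons, Finset.prod_cons, zpow_add, ih]

private lemma my_sym_sum {θ : ℕ} (f : Fin θ → Fin θ → ℤ) (hf : ∀ i j, f i j = f j i) :
    ∑ i, ∑ j, f i j =
      (∑ i, f i i) + ∑ i, ∑ j, (if i < j then 2 * f i j else 0) := by
  have key : ∀ i j : Fin θ, f i j =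
      (if i = j then f i j else 0) + (if i < j then f i j else 0)
        + (if j < i then f i j else 0) := by
    intro i j
    rcases lt_trichotomy i j with h | h | h
    · simp [h, h.ne, not_lt_of_gt h]
    · simp [h, lt_irrefl]
    · simp [h, h.ne', not_lt_of_gt h]
  calc ∑ i, ∑ j, f i j
      = ∑ i, ∑ j, ((if i = j then f i j else 0) + (if i < j then f i j else 0)
        + (if j < i then f i j else 0)) := by
        refine Finset.sum_congr rfl fun i _ => Finset.sum_congr rfl fun j _ => key i j
    _ = (∑ i, ∑ j, if i = j then f i j else 0)
        + (∑ i, ∑ j, if i < j then f i j else 0)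
        + (∑ i, ∑ j, if j < i then f i j else 0) := by
        simp [Finset.sum_add_distrib]
    _ = (∑ i, f i i) + (∑ i, ∑ j, if i < j then f i j else 0)
        + (∑ i, ∑ j, if i < j then f i j else 0) := by
        congr 1
        · congr 1
          refine Finset.sum_congr rfl fun i _ => ?_
          simp [Finset.sum_ite_eq' Finset.univ i (fun j => f i j)]
        · rw [Finset.sum_comm]
          refine Finset.sum_congr rfl fun i _ => Finset.sum_congr rfl fun j _ => ?_
          rw [hf j i]
    _ = (∑ i, f i i) + ∑ i, ∑ j, (if i < j then 2 * f i j else 0) := by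
        rw [add_assoc, ← Finset.sum_add_distrib]
        congr 1
        refine Finset.sum_congr rfl fun i _ => ?_
        rw [← Finset.sum_add_distrib]
        refine Finset.sum_congr rfl fun j _ => ?_
        split <;> ring

private lemma my_zpow_sum0 {K : Type*} [CommGroupWithZero K] {ι : Type*} (x : K) (hx : x ≠ 0)
    (s : Finset ι) (f : ι → ℤ) : x ^ (∑ i ∈ s, f i) = ∏ i ∈ s, x ^ f i := by
  induction s using Finset.cons_induction with
  | empty => simp
  | cons a s h ih => rw [Finset.sum_cons, Finset.prod_cons, zpow_add₀ hx, ih]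

/-- If `χ₁^{k₁} ⋯ χ_θ^{k_θ} = 1` then the quadratic form `Q`
vanishes at `(k₁, …, k_θ)`. -/
theorem stmt_3 (K : Type*) [Field K] (G : Type*) [CommGroup G] (θ : ℕ)
    (χ : Fin θ → (G →* Kˣ)) (g : Fin θ → G)
    (q : K) (hq : ¬ ∃ n : ℕ, 0 < n ∧ q ^ n = 1)
    (d : Fin θ → ℤ) (hd : ∀ i, d i ≠ 0)
    (ω : Fin θ → K) (hω : ∀ i, ∃ n : ℕ, 0 < n ∧ ω i ^ n = 1)
    (hχg : ∀ i, (χ i (g i) : K) = ω i * q ^ d i)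
    (a : Fin θ → Fin θ → ℤ) (haii : ∀ i, a i i = 2)
    (hda : ∀ i j, d i * a i j = d j * a j i)
    (hcartan : ∀ i j, χ j (g i) * χ i (g j) = χ i (g i) ^ a i j)
    (kk : Fin θ → ℤ) (hrel : ∏ i, χ i ^ kk i = 1) :
    (∑ i, 2 * kk i ^ 2 * d i) +
      (∑ i, ∑ j, if i < j then 2 * kk i * kk j * d i * a i j else 0) = 0 := by
  rcases Nat.eq_zero_or_pos θ with hθ | hθ
  · subst hθ; simp
  -- the exponents
  set m : Fin θ → ℤ := fun i => ∑ j, a i j * (kk i * kk j) with hm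
  set E : ℤ := ∑ i, d i * m i with hE
  -- step 0 : q ≠ 0 and ω i ≠ 0
  have hωne : ∀ i, ω i ≠ 0 := by
    intro i h
    obtain ⟨n, hn, h1⟩ := hω i
    rw [h, zero_pow hn.ne'] at h1
    exact zero_ne_one h1
  have hq0 : q ≠ 0 := by
    intro h
    have i : Fin θ := ⟨0, hθ⟩
    have := hχg i
    rw [h, zero_zpow (d i) (hd i), mul_zero] at this
    exact (χ i (g i)).ne_zero this
  -- step 1 : evaluate the relation at each g i
  have h1 : ∀ i, ∏ j, (χ j (g i)) ^ kk j = 1 := by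
    intro i
    have := congrArg (fun φ : G →* Kˣ => φ (g i)) hrel
    simpa [MonoidHom.finset_prod_apply] using this
  -- step 2 : the big product
  have hT : ∏ i, ∏ j, (χ j (g i)) ^ (kk j * kk i) = 1 := by
    calc ∏ i, ∏ j, (χ j (g i)) ^ (kk j * kk i)
        = ∏ i, (∏ j, (χ j (g i)) ^ kk j) ^ kk i := by
          refine Finset.prod_congr rfl fun i _ => ?_
          rw [← Finset.prod_zpow]
          exact Finset.prod_congr rfl fun j _ => (zpow_mul _ _ _)
      _ = 1 := by simp [h1]
  have hswap : ∏ i, ∏ j, (χ i (g j)) ^ (kk i * kk j) = 1 := by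
    rw [Finset.prod_comm]; exact hT
  -- step 3 : square of the relation rearranged via the Cartan condition
  have hsq : ∏ i, (χ i (g i)) ^ (m i) = 1 := by
    calc ∏ i, (χ i (g i)) ^ (m i)
        = ∏ i, ∏ j, ((χ i (g i)) ^ (a i j)) ^ (kk i * kk j) := by
          refine Finset.prod_congr rfl fun i _ => ?_
          rw [hm, my_zpow_sum]
          exact Finset.prod_congr rfl fun j _ => (zpow_mul _ _ _)
      _ = ∏ i, ∏ j, (χ j (g i) * χ i (g j)) ^ (kk i * kk j) := by
          refine Finset.prod_congr rfl fun i _ => Finset.prod_congr rfl fun j _ => ?_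
          rw [hcartan i j]
      _ = (∏ i, ∏ j, (χ j (g i)) ^ (kk j * kk i))
          * (∏ i, ∏ j, (χ i (g j)) ^ (kk i * kk j)) := by
          rw [← Finset.prod_mul_distrib]
          refine Finset.prod_congr rfl fun i _ => ?_
          rw [← Finset.prod_mul_distrib]
          refine Finset.prod_congr rfl fun j _ => ?_
          rw [mul_zpow, mul_comm (kk j) (kk i)]
      _ = 1 := by rw [hT, hswap, one_mul]
  -- step 4 : pass to K
  have hK : (∏ i, (ω i) ^ (m i)) * q ^ E = 1 := by
    have h2 := congrArg (Units.coeHom K) hsq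
    rw [map_prod, map_one] at h2
    simp only [Units.coeHom_apply, Units.val_zpow_eq_zpow_val] at h2
    calc (∏ i, (ω i) ^ (m i)) * q ^ E
        = ∏ i, ((ω i) ^ (m i) * q ^ (d i * m i)) := by
          rw [Finset.prod_mul_distrib]
          congr 1
          rw [hE, my_zpow_sum0 q hq0]
      _ = ∏ i, ((χ i (g i) : K)) ^ (m i) := by
          refine Finset.prod_congr rfl fun i _ => ?_
          rw [hχg i, mul_zpow, ← zpow_mul]
      _ = 1 := h2
  -- step 5 : kill the roots of unity
  obtain ⟨n, hn⟩ := Classical.axiomOfChoice hω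
  set N : ℕ := ∏ i, n i with hN
  have hNpos : 0 < N := Finset.prod_pos fun i _ => (hn i).1
  have hωN : ∀ i : Fin θ, (ω i) ^ (N : ℤ) = 1 := by
    intro i
    obtain ⟨c, hc⟩ := Finset.dvd_prod_of_mem n (Finset.mem_univ i)
    have hNn : ω i ^ N = 1 := by rw [hN, hc, pow_mul, (hn i).2, one_pow]
    rw [zpow_natCast, hNn]
  have hqEN : q ^ (E * (N : ℤ)) = 1 := by
    have h3 := congrArg (fun x : K => x ^ (N : ℤ)) hK
    simp only [one_zpow] at h3
    calc q ^ (E * (N : ℤ))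
        = (∏ i, (ω i) ^ (m i)) ^ (N : ℤ) * q ^ (E * (N : ℤ)) := by
          rw [← Finset.prod_zpow]
          have : ∀ i : Fin θ, ((ω i) ^ (m i)) ^ (N : ℤ) = 1 := by
            intro i
            rw [← zpow_mul, mul_comm, zpow_mul, hωN i, one_zpow]
          simp [this]
      _ = ((∏ i, (ω i) ^ (m i)) * q ^ E) ^ (N : ℤ) := by
          rw [mul_zpow, ← zpow_mul]
      _ = 1 := by rw [hK, one_zpow]
  -- step 6 : E = 0
  have hE0 : E = 0 := by
    by_contra hEne
    have hENne : E * (N : ℤ) ≠ 0 :=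
      mul_ne_zero hEne (by exact_mod_cast hNpos.ne')
    have habs : q ^ ((E * (N : ℤ)).natAbs) = 1 := by
      rw [← zpow_natCast]
      rcases Int.natAbs_eq (E * (N : ℤ)) with h | h
      · rw [← h]; exact hqEN
      · have h' : (((E * (N : ℤ)).natAbs : ℤ)) = -(E * (N : ℤ)) := by omega
        rw [h', zpow_neg, hqEN, inv_one]
    exact hq ⟨(E * (N : ℤ)).natAbs, Int.natAbs_pos.mpr hENne, habs⟩
  -- step 7 : identify the quadratic form with E
  have hgoal : (∑ i, 2 * kk i ^ 2 * d i) +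
      (∑ i, ∑ j, if i < j then 2 * kk i * kk j * d i * a i j else 0) = E := by
    have hfs : ∀ i j : Fin θ, (fun i j => d i * a i j * kk i * kk j) i j
        = (fun i j => d i * a i j * kk i * kk j) j i := by
      intro i j
      simp only
      rw [hda i j]; ring
    have h4 := my_sym_sum (fun i j => d i * a i j * kk i * kk j) hfs
    have h5 : E = ∑ i, ∑ j, d i * a i j * kk i * kk j := by
      rw [hE]
      refine Finset.sum_congr rfl fun i _ => ?_
      rw [hm, Finset.mul_sum]
      exact Finset.sum_congr rfl fun j _ => by ring
    rw [h5, h4]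
    congr 1
    · refine Finset.sum_congr rfl fun i _ => ?_
      rw [haii i]; ring
    · refine Finset.sum_congr rfl fun i _ => Finset.sum_congr rfl fun j _ => ?_
      split <;> ring
  rw [hgoal, hE0]
end

section
/- Let $U$, $A$ be $k$-algebras, $H = U \otimes A$ an algebra structure satisfying $(u \otimes a)(u' \otimes a') = uu' \otimes aa'$ whenever $a = 1$ or $u' = 1$, and let $\rho : U \to k$, $\chi : A \to k$ be algebra homomorphisms. Define $\Psi : A \otimes U \to k$ by $\Psi(a, u) = (\rho \otimes \chi)((1 \otimes a)(u \otimes 1))$. Then $\Psi$ is $H$-balanced: $\Psi(a \cdot_\rho h, u) = \Psi(a, h \cdot_\chi u)$ for all $a \in A$, $h \in H$, $u \in U$. -/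
open scoped TensorProduct

noncomputable section

variable {K U A H : Type*} [Field K] [Ring U] [Algebra K U] [Ring A] [Algebra K A]
  [Ring H] [Algebra K H]

/-- `(id ⊗ χ) : U ⊗ A → U`. -/
def idTensorChi (χ : A →ₐ[K] K) : U ⊗[K] A →ₗ[K] U :=
  (TensorProduct.rid K U).toLinearMap ∘ₗ TensorProduct.map LinearMap.id χ.toLinearMap

/-- `(ρ ⊗ id) : U ⊗ A → A`. -/
def rhoTensorId (ρ : U →ₐ[K] K) : U ⊗[K] A →ₗ[K] A :=
  (TensorProduct.lid K A).toLinearMap ∘ₗ TensorProduct.map ρ.toLinearMap LinearMap.id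

/-- The left action of `H` on `U_χ ≅ H ⊗_A k`:  `h ·_χ u' = (id ⊗ χ)(h · (u' ⊗ 1))`. -/
def actChi (φ : (U ⊗[K] A) ≃ₗ[K] H) (χ : A →ₐ[K] K) (h : H) (u : U) : U :=
  idTensorChi χ (φ.symm (h * φ (u ⊗ₜ[K] (1 : A))))

/-- The right action of `H` on `A_ρ ≅ k ⊗_U H`:  `a ·_ρ h = (ρ ⊗ id)((1 ⊗ a) · h)`. -/
def actRho (φ : (U ⊗[K] A) ≃ₗ[K] H) (ρ : U →ₐ[K] K) (a : A) (h : H) : A :=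
  rhoTensorId ρ (φ.symm (φ ((1 : U) ⊗ₜ[K] a) * h))

/-- The bilinear form `Ψ(a, u) = (ρ ⊗ χ)((1 ⊗ a)(u ⊗ 1))`. -/
def PsiForm (φ : (U ⊗[K] A) ≃ₗ[K] H) (ρ : U →ₐ[K] K) (χ : A →ₐ[K] K)
    (a : A) (u : U) : K :=
  ρ (idTensorChi χ (φ.symm (φ ((1 : U) ⊗ₜ[K] a) * φ (u ⊗ₜ[K] (1 : A)))))

/-! Both sides equal `(ρ ⊗ χ)((1 ⊗ a) h (u ⊗ 1))`. Transported to `H`, the functional `ρ ⊗ χ` is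
left `U`-linear through `ρ` and right `A`-linear through `χ`, since `H` multiplies `u ⊗ 1` on the
left and `1 ⊗ a` on the right componentwise, and every `u ⊗ a` factors as `(u ⊗ 1)(1 ⊗ a)`. Hence
it cannot tell `(1 ⊗ a) h` from `1 ⊗ (a ·_ρ h)` when multiplied by anything on the right, nor
`h (u ⊗ 1)` from `(h ·_χ u) ⊗ 1` when multiplied by anything on the left. -/

def psiFunctional (φ : (U ⊗[K] A) ≃ₗ[K] H) (ρ : U →ₐ[K] K) (χ : A →ₐ[K] K) : H →ₗ[K] K :=
  ρ.toLinearMap ∘ₗ idTensorChi χ ∘ₗ φ.symm.toLinearMap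

section psiFunctional

variable (φ : (U ⊗[K] A) ≃ₗ[K] H) (ρ : U →ₐ[K] K) (χ : A →ₐ[K] K)

theorem idTensorChi_tmul (u : U) (a : A) : idTensorChi χ (u ⊗ₜ[K] a) = χ a • u := by
  simp [idTensorChi]

theorem rhoTensorId_tmul (u : U) (a : A) : rhoTensorId ρ (u ⊗ₜ[K] a) = ρ u • a := by
  simp [rhoTensorId]

theorem psiFunctional_apply_tmul (u : U) (a : A) :
    psiFunctional φ ρ χ (φ (u ⊗ₜ[K] a)) = ρ u * χ a := by
  simp [psiFunctional, idTensorChi_tmul, mul_comm]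

theorem PsiForm_eq_psiFunctional (a : A) (u : U) :
    PsiForm φ ρ χ a u = psiFunctional φ ρ χ (φ ((1 : U) ⊗ₜ[K] a) * φ (u ⊗ₜ[K] (1 : A))) :=
  rfl

theorem map_tmul_eq_mul
    (hmul2 : ∀ (u : U) (a a' : A),
      φ (u ⊗ₜ[K] a) * φ ((1 : U) ⊗ₜ[K] a') = φ (u ⊗ₜ[K] (a * a')))
    (u : U) (a : A) : φ (u ⊗ₜ[K] a) = φ (u ⊗ₜ[K] (1 : A)) * φ ((1 : U) ⊗ₜ[K] a) := by
  rw [hmul2, one_mul]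

theorem psiFunctional_mul_one_tmul
    (hmul2 : ∀ (u : U) (a a' : A),
      φ (u ⊗ₜ[K] a) * φ ((1 : U) ⊗ₜ[K] a') = φ (u ⊗ₜ[K] (a * a')))
    (y : H) (a : A) :
    psiFunctional φ ρ χ (y * φ ((1 : U) ⊗ₜ[K] a)) = χ a * psiFunctional φ ρ χ y := by
  obtain ⟨s, rfl⟩ := φ.surjective y
  induction s using TensorProduct.induction_on with
  | zero => simp
  | tmul u a' =>
    rw [hmul2, psiFunctional_apply_tmul, psiFunctional_apply_tmul, map_mul]
    ring
  | add s t hs ht => simp only [map_add, add_mul, mul_add, hs, ht]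

theorem psiFunctional_tmul_one_mul
    (hmul1 : ∀ (u u' : U) (a' : A),
      φ (u ⊗ₜ[K] (1 : A)) * φ (u' ⊗ₜ[K] a') = φ ((u * u') ⊗ₜ[K] a'))
    (u : U) (y : H) :
    psiFunctional φ ρ χ (φ (u ⊗ₜ[K] (1 : A)) * y) = ρ u * psiFunctional φ ρ χ y := by
  obtain ⟨s, rfl⟩ := φ.surjective y
  induction s using TensorProduct.induction_on with
  | zero => simp
  | tmul u' a =>
    rw [hmul1, psiFunctional_apply_tmul, psiFunctional_apply_tmul, map_mul]
    ring
  | add s t hs ht => simp only [map_add, mul_add, hs, ht]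

theorem psiFunctional_mul_idTensorChi_tmul_one
    (hmul2 : ∀ (u : U) (a a' : A),
      φ (u ⊗ₜ[K] a) * φ ((1 : U) ⊗ₜ[K] a') = φ (u ⊗ₜ[K] (a * a')))
    (x : H) (t : U ⊗[K] A) :
    psiFunctional φ ρ χ (x * φ (idTensorChi χ t ⊗ₜ[K] (1 : A))) =
      psiFunctional φ ρ χ (x * φ t) := by
  induction t using TensorProduct.induction_on with
  | zero => simp
  | tmul u a =>
    rw [idTensorChi_tmul, ← TensorProduct.smul_tmul', map_smul, mul_smul_comm, map_smul,
      map_tmul_eq_mul φ hmul2 u a, ← mul_assoc, psiFunctional_mul_one_tmul φ ρ χ hmul2,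
      smul_eq_mul]
  | add s t hs ht => simp only [map_add, TensorProduct.add_tmul, mul_add, hs, ht]

theorem psiFunctional_one_tmul_rhoTensorId_mul
    (hmul1 : ∀ (u u' : U) (a' : A),
      φ (u ⊗ₜ[K] (1 : A)) * φ (u' ⊗ₜ[K] a') = φ ((u * u') ⊗ₜ[K] a'))
    (hmul2 : ∀ (u : U) (a a' : A),
      φ (u ⊗ₜ[K] a) * φ ((1 : U) ⊗ₜ[K] a') = φ (u ⊗ₜ[K] (a * a')))
    (s : U ⊗[K] A) (z : H) :
    psiFunctional φ ρ χ (φ ((1 : U) ⊗ₜ[K] rhoTensorId ρ s) * z) =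
      psiFunctional φ ρ χ (φ s * z) := by
  induction s using TensorProduct.induction_on with
  | zero => simp
  | tmul u a =>
    rw [rhoTensorId_tmul, TensorProduct.tmul_smul, map_smul, smul_mul_assoc, map_smul,
      map_tmul_eq_mul φ hmul2 u a, mul_assoc, psiFunctional_tmul_one_mul φ ρ χ hmul1,
      smul_eq_mul]
  | add s t hs ht => simp only [map_add, TensorProduct.tmul_add, add_mul, hs, ht]

end psiFunctional

theorem stmt_13_general
    (φ : (U ⊗[K] A) ≃ₗ[K] H)
    (hmul1 : ∀ (u u' : U) (a' : A),
      φ (u ⊗ₜ[K] (1 : A)) * φ (u' ⊗ₜ[K] a') = φ ((u * u') ⊗ₜ[K] a'))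
    (hmul2 : ∀ (u : U) (a a' : A),
      φ (u ⊗ₜ[K] a) * φ ((1 : U) ⊗ₜ[K] a') = φ (u ⊗ₜ[K] (a * a')))
    (ρ : U →ₐ[K] K) (χ : A →ₐ[K] K) :
    ∀ (a : A) (h : H) (u : U),
      PsiForm φ ρ χ (actRho φ ρ a h) u = PsiForm φ ρ χ a (actChi φ χ h u) := by
  intro a h u
  rw [PsiForm_eq_psiFunctional, PsiForm_eq_psiFunctional, actRho, actChi,
    psiFunctional_one_tmul_rhoTensorId_mul φ ρ χ hmul1 hmul2,
    psiFunctional_mul_idTensorChi_tmul_one φ ρ χ hmul2, φ.apply_symm_apply, φ.apply_symm_apply,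
    mul_assoc]

/-- the form `Ψ` is `H`-balanced. -/
theorem stmt_13
    (φ : (U ⊗[K] A) ≃ₗ[K] H)
    (hone : φ ((1 : U) ⊗ₜ[K] (1 : A)) = 1)
    (hmul1 : ∀ (u u' : U) (a' : A),
      φ (u ⊗ₜ[K] (1 : A)) * φ (u' ⊗ₜ[K] a') = φ ((u * u') ⊗ₜ[K] a'))
    (hmul2 : ∀ (u : U) (a a' : A),
      φ (u ⊗ₜ[K] a) * φ ((1 : U) ⊗ₜ[K] a') = φ (u ⊗ₜ[K] (a * a')))
    (ρ : U →ₐ[K] K) (χ : A →ₐ[K] K) :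
    ∀ (a : A) (h : H) (u : U),
      PsiForm φ ρ χ (actRho φ ρ a h) u = PsiForm φ ρ χ a (actChi φ χ h u) :=
  stmt_13_general φ hmul1 hmul2 ρ χ
end
end

section
/- Let $U$, $A$ be $k$-algebras, $H = U \otimes A$ an algebra structure satisfying $(u \otimes a)(u' \otimes a') = uu' \otimes aa'$ whenever $a = 1$ or $u' = 1$, and suppose there is a subalgebra $U' \subseteq U$ such that (i) the restriction map $\mathrm{Alg}(U, k) \to \mathrm{Alg}(U', k)$ is injective, and (ii) $(u \otimes a) \cdot_\chi u' = \chi(a) uu'$ for all $u \in U$, $a \in A$, $\chi \in \mathrm{Alg}(A, k)$, $u' \in U'$. If $\rho, \rho' \in \mathrm{Alg}(U, k)$ and $\chi, \chi' \in \mathrm{Alg}(A, k)$ with $L(\rho, \chi) \cong L(\rho', \chi')$ as left $U$-modules, then $\rho = \rho'$. -/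
/-!
Compose the isomorphism `L(ρ, χ) ≅ L(ρ', χ')` with the functional induced by `ρ'` (which
vanishes on `I(ρ', χ')`) to get a functional `g` on `U` with `g (u * x) = ρ' u * g x`,
`g 1 ≠ 0` and `g` vanishing on `I(ρ, χ)`. For `u' ∈ U'`, hypothesis (ii) makes the left ideal
`U (u' - ρ u')` an `H`-submodule of `U_χ` inside `ker ρ`, so `u' - ρ u' ∈ I(ρ, χ)`, whence
`ρ u' * g 1 = g u' = ρ' u' * g 1`. Thus `ρ` and `ρ'` agree on `U'`, hence everywhere by (i).
-/

open scoped TensorProduct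

noncomputable section

variable {K U A H : Type*} [Field K] [Ring U] [Algebra K U] [Ring A] [Algebra K A]
  [Ring H] [Algebra K H]

/-- `I(ρ, χ)`: the sum of all `H`-submodules of `U_χ` contained in `ker ρ`. -/
def Isub (φ : (U ⊗[K] A) ≃ₗ[K] H) (ρ : U →ₐ[K] K) (χ : A →ₐ[K] K) :
    Submodule K U :=
  sSup {W : Submodule K U |
    (∀ (h : H) (w : U), w ∈ W → actChi φ χ h w ∈ W) ∧ W ≤ LinearMap.ker ρ.toLinearMap}

section Isub

variable (φ : (U ⊗[K] A) ≃ₗ[K] H) (ρ : U →ₐ[K] K) (χ : A →ₐ[K] K)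

theorem le_Isub {W : Submodule K U} (hW : ∀ (h : H) (w : U), w ∈ W → actChi φ χ h w ∈ W)
    (hWρ : W ≤ LinearMap.ker ρ.toLinearMap) : W ≤ Isub φ ρ χ :=
  le_sSup ⟨hW, hWρ⟩

theorem Isub_le_ker : Isub φ ρ χ ≤ LinearMap.ker ρ.toLinearMap :=
  sSup_le fun _ hW => hW.2

theorem actChi_add (h₁ h₂ : H) (u : U) :
    actChi φ χ (h₁ + h₂) u = actChi φ χ h₁ u + actChi φ χ h₂ u := by
  simp only [actChi, add_mul, map_add]

theorem actChi_mul_right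
    (hmul1 : ∀ (u u' : U) (a' : A),
      φ (u ⊗ₜ[K] (1 : A)) * φ (u' ⊗ₜ[K] a') = φ ((u * u') ⊗ₜ[K] a'))
    (h : H) (x u' : U) :
    actChi φ χ h (x * u') = actChi φ χ (h * φ (x ⊗ₜ[K] (1 : A))) u' := by
  rw [actChi, actChi, ← hmul1, mul_assoc]

theorem actChi_mem_range_mulRight {u' : U}
    (hu' : ∀ (u : U) (a : A), actChi φ χ (φ (u ⊗ₜ[K] a)) u' = χ a • (u * u')) (h : H) :
    actChi φ χ h u' ∈ LinearMap.range (LinearMap.mulRight K u') := by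
  rw [← φ.apply_symm_apply h]
  induction φ.symm h using TensorProduct.induction_on with
  | zero => simp [actChi]
  | tmul u a => exact ⟨χ a • u, by rw [hu', LinearMap.mulRight_apply, smul_mul_assoc]⟩
  | add x y hx hy => rw [map_add, actChi_add]; exact add_mem hx hy

theorem mem_Isub_of_apply_eq_zero {u' : U}
    (hmul1 : ∀ (u u' : U) (a' : A),
      φ (u ⊗ₜ[K] (1 : A)) * φ (u' ⊗ₜ[K] a') = φ ((u * u') ⊗ₜ[K] a'))
    (hu' : ∀ (u : U) (a : A), actChi φ χ (φ (u ⊗ₜ[K] a)) u' = χ a • (u * u'))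
    (hρ : ρ u' = 0) : u' ∈ Isub φ ρ χ := by
  refine le_Isub φ ρ χ (W := LinearMap.range (LinearMap.mulRight K u')) ?_ ?_ ⟨1, one_mul u'⟩
  · rintro h _ ⟨x, rfl⟩
    rw [LinearMap.mulRight_apply, actChi_mul_right φ χ hmul1]
    exact actChi_mem_range_mulRight φ χ hu' _
  · rintro _ ⟨x, rfl⟩
    simp [hρ]

end Isub

theorem AlgHom.apply_eq_of_sub_mem_of_quotientEquiv {I J : Submodule K U} {ρ' : U →ₐ[K] K}
    (hJ : J ≤ LinearMap.ker ρ'.toLinearMap) (T : (U ⧸ I) ≃ₗ[K] (U ⧸ J))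
    (hT : ∀ u x y : U, T (I.mkQ x) = J.mkQ y → T (I.mkQ (u * x)) = J.mkQ (u * y))
    {u : U} {c : K} (hu : u - c • 1 ∈ I) : ρ' u = c := by
  let g : U →ₗ[K] K := J.liftQ ρ'.toLinearMap hJ ∘ₗ T.toLinearMap ∘ₗ I.mkQ
  have hg : ∀ x y : U, T (I.mkQ x) = J.mkQ y → g x = ρ' y := fun x y hxy => by
    simp only [g, LinearMap.comp_apply, LinearEquiv.coe_coe, hxy]
    rfl
  have hg_mul : ∀ v x : U, g (v * x) = ρ' v * g x := fun v x => by
    obtain ⟨y, hy⟩ := J.mkQ_surjective (T (I.mkQ x))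
    rw [hg x y hy.symm, hg _ _ (hT v x y hy.symm), map_mul]
  have hg_one : g 1 ≠ 0 := by
    obtain ⟨p, hp⟩ := T.surjective (J.mkQ 1)
    obtain ⟨x, rfl⟩ := I.mkQ_surjective p
    intro h0
    have := hg x 1 hp
    rw [← mul_one x, hg_mul, h0, mul_zero, map_one] at this
    exact zero_ne_one this
  have hg_u : g u = c * g 1 := by
    have : g (u - c • 1) = 0 := by
      rw [LinearMap.comp_apply, LinearMap.comp_apply, Submodule.mkQ_apply,
        (Submodule.Quotient.mk_eq_zero I).2 hu, map_zero, map_zero]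
    rwa [map_sub, map_smul, smul_eq_mul, sub_eq_zero] at this
  refine mul_right_cancel₀ hg_one ?_
  rw [← hg_u, ← mul_one u, hg_mul, mul_one]

theorem stmt_15_general
    (φ : (U ⊗[K] A) ≃ₗ[K] H)
    (hmul1 : ∀ (u u' : U) (a' : A),
      φ (u ⊗ₜ[K] (1 : A)) * φ (u' ⊗ₜ[K] a') = φ ((u * u') ⊗ₜ[K] a'))
    (U' : Subalgebra K U)
    (hres : ∀ ρ₁ ρ₂ : U →ₐ[K] K, (∀ x ∈ U', ρ₁ x = ρ₂ x) → ρ₁ = ρ₂)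
    (hact : ∀ (χ : A →ₐ[K] K) (u : U) (a : A), ∀ u' ∈ U',
      actChi φ χ (φ (u ⊗ₜ[K] a)) u' = χ a • (u * u'))
    (ρ ρ' : U →ₐ[K] K) (χ χ' : A →ₐ[K] K)
    (T : (U ⧸ Isub φ ρ χ) ≃ₗ[K] (U ⧸ Isub φ ρ' χ'))
    (hT : ∀ u x y : U, T ((Isub φ ρ χ).mkQ x) = (Isub φ ρ' χ').mkQ y →
      T ((Isub φ ρ χ).mkQ (u * x)) = (Isub φ ρ' χ').mkQ (u * y)) :
    ρ = ρ' := by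
  refine hres ρ ρ' fun u' hu' => ?_
  have hmem : u' - ρ u' • 1 ∈ U' := sub_mem hu' (Subalgebra.smul_mem U' (one_mem U') _)
  have hker : u' - ρ u' • 1 ∈ Isub φ ρ χ :=
    mem_Isub_of_apply_eq_zero φ ρ χ hmul1 (fun u a => hact χ u a _ hmem) (by simp)
  exact (ρ'.apply_eq_of_sub_mem_of_quotientEquiv (Isub_le_ker φ ρ' χ') T hT hker).symm

/-- if `L(ρ, χ) ≅ L(ρ', χ')` as left `U`-modules then `ρ = ρ'`. -/
theorem stmt_15
    (φ : (U ⊗[K] A) ≃ₗ[K] H)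
    (hone : φ ((1 : U) ⊗ₜ[K] (1 : A)) = 1)
    (hmul1 : ∀ (u u' : U) (a' : A),
      φ (u ⊗ₜ[K] (1 : A)) * φ (u' ⊗ₜ[K] a') = φ ((u * u') ⊗ₜ[K] a'))
    (hmul2 : ∀ (u : U) (a a' : A),
      φ (u ⊗ₜ[K] a) * φ ((1 : U) ⊗ₜ[K] a') = φ (u ⊗ₜ[K] (a * a')))
    (U' : Subalgebra K U)
    (hres : ∀ ρ₁ ρ₂ : U →ₐ[K] K, (∀ x ∈ U', ρ₁ x = ρ₂ x) → ρ₁ = ρ₂)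
    (hact : ∀ (χ : A →ₐ[K] K) (u : U) (a : A), ∀ u' ∈ U',
      actChi φ χ (φ (u ⊗ₜ[K] a)) u' = χ a • (u * u'))
    (ρ ρ' : U →ₐ[K] K) (χ χ' : A →ₐ[K] K)
    (T : (U ⧸ Isub φ ρ χ) ≃ₗ[K] (U ⧸ Isub φ ρ' χ'))
    (hT : ∀ u x y : U, T ((Isub φ ρ χ).mkQ x) = (Isub φ ρ' χ').mkQ y →
      T ((Isub φ ρ χ).mkQ (u * x)) = (Isub φ ρ' χ').mkQ (u * y)) :
    ρ = ρ' :=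
  stmt_15_general φ hmul1 U' hres hact ρ ρ' χ χ' T hT
end
end

section
/- Let $G$ be an abelian group, $k$ a field, and $q \in k^\times$ not a root of unity. Suppose $g_1, \ldots, g_\theta \in G$ and characters $\chi_1, \ldots, \chi_\theta : G \to k^\times$ satisfy $\chi_i(g_i) = q^{d_i}$ for nonzero integers $d_i$ and $\chi_j(g_i)\chi_i(g_j) = \chi_i(g_i)^{a_{ij}}$ where $(a_{ij})$ is a matrix of integers with $a_{ii} = 2$ and $d_i a_{ij} = d_j a_{ji}$. If integers $k_1, \ldots, k_\theta$ satisfy $g_1^{k_1} \cdots g_\theta^{k_\theta} = 1$, then $\sum_{i=1}^\theta 2 k_i^2 d_i + \sum_{1 \leq i < j \leq \theta} 2 k_i k_j d_i a_{ij} = 0$. -/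
/-!
Put `B i j = χ j (g i)`. Applying each `χ j` to the relation `∏ g i ^ k i = 1` and raising to
the power `k j` gives `∏ i, ∏ j, B i j ^ (k i * k j) = 1`. Multiplying this product by its
transpose and using `B i j * B j i = q ^ (d i * a i j)` turns it into `q ^ Q(k)` with
`Q(k) = ∑ i, ∑ j, k i * k j * d i * a i j`; splitting off the diagonal (`a i i = 2`) and pairing
`(i, j)` with `(j, i)` (`d i * a i j = d j * a j i`) gives the form of the statement.
Hence `q ^ Q(k) = 1`, and `Q(k) = 0` because `q` has infinite order.
-/

open Finset

section BigOperators

variable {ι : Type*}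

lemma prod_zpow_eq_zpow_sum {M : Type*} [CommGroup M] (s : Finset ι) (f : ι → ℤ) (a : M) :
    ∏ i ∈ s, a ^ f i = a ^ ∑ i ∈ s, f i :=
  cons_induction (by simp) (fun _ _ _ _ ↦ by simp [prod_cons, sum_cons, zpow_add, *]) s

lemma sum_sum_eq_sum_diag_add_sum_sum_lt {M : Type*} [AddCommMonoid M] [Fintype ι]
    [LinearOrder ι] (f : ι → ι → M) :
    ∑ i, ∑ j, f i j = ∑ i, f i i + ∑ i, ∑ j, if i < j then f i j + f j i else 0 := by
  have hsplit : ∀ i j, f i j = (if i = j then f i j else 0) + (if i < j then f i j else 0)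
      + (if j < i then f i j else 0) := by
    intro i j
    rcases lt_trichotomy i j with h | rfl | h
    · simp [h, h.ne, h.not_gt]
    · simp
    · simp [h, h.ne', h.not_gt]
  have hlower : ∑ i, ∑ j, (if j < i then f i j else 0) = ∑ i, ∑ j, if i < j then f j i else 0 :=
    sum_comm
  rw [sum_congr rfl fun i _ ↦ sum_congr rfl fun j _ ↦ hsplit i j]
  simp only [sum_add_distrib, hlower, sum_ite_eq, mem_univ, if_true]
  rw [add_assoc, ← sum_add_distrib]
  simp only [← sum_add_distrib, ite_add_zero]

end BigOperators

section Pairing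

variable {ι : Type*} [Fintype ι] {M : Type*} [CommGroup M]

lemma prod_prod_map_zpow_mul_eq_one {G : Type*} [CommGroup G] (χ : ι → G →* M) (g : ι → G)
    (k : ι → ℤ) (hrel : ∏ i, g i ^ k i = 1) : ∏ i, ∏ j, χ j (g i) ^ (k i * k j) = 1 := by
  have hχ : ∀ j, ∏ i, χ j (g i) ^ k i = 1 := fun j ↦ by
    simpa only [map_prod, map_zpow, map_one] using congrArg (χ j) hrel
  rw [prod_comm]
  refine prod_eq_one fun j _ ↦ ?_
  simp_rw [zpow_mul, prod_zpow, hχ, one_zpow]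

lemma zpow_sum_sum_eq_sq_prod_prod (B : ι → ι → M) (q : M) (c : ι → ι → ℤ)
    (hB : ∀ i j, B i j * B j i = q ^ c i j) (k : ι → ℤ) :
    q ^ ∑ i, ∑ j, k i * k j * c i j = (∏ i, ∏ j, B i j ^ (k i * k j)) ^ 2 := by
  have htranspose : ∏ i, ∏ j, B j i ^ (k i * k j) = ∏ i, ∏ j, B i j ^ (k i * k j) := by
    rw [prod_comm]
    simp_rw [mul_comm (k _) (k _)]
  calc q ^ ∑ i, ∑ j, k i * k j * c i j
      = ∏ i, ∏ j, (B i j * B j i) ^ (k i * k j) := by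
        simp_rw [← prod_zpow_eq_zpow_sum, hB, ← zpow_mul, mul_comm (c _ _)]
    _ = (∏ i, ∏ j, B i j ^ (k i * k j)) ^ 2 := by
        simp_rw [mul_zpow, prod_mul_distrib, htranspose, sq]

end Pairing

theorem stmt_17_general (K : Type*) [Field K] (G : Type*) [CommGroup G] (θ : ℕ)
    (χ : Fin θ → (G →* Kˣ)) (g : Fin θ → G)
    (q : Kˣ) (hq : ¬ ∃ n : ℕ, 0 < n ∧ q ^ n = 1)
    (d : Fin θ → ℤ)
    (hχg : ∀ i, χ i (g i) = q ^ d i)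
    (a : Fin θ → Fin θ → ℤ) (haii : ∀ i, a i i = 2)
    (hda : ∀ i j, d i * a i j = d j * a j i)
    (hcartan : ∀ i j, χ j (g i) * χ i (g j) = χ i (g i) ^ a i j)
    (kk : Fin θ → ℤ) (hrel : ∏ i, g i ^ kk i = 1) :
    (∑ i, 2 * kk i ^ 2 * d i) +
      (∑ i, ∑ j, if i < j then 2 * kk i * kk j * d i * a i j else 0) = 0 := by
  have hB : ∀ i j, χ j (g i) * χ i (g j) = q ^ (d i * a i j) := fun i j ↦ by
    rw [hcartan, hχg, zpow_mul]
  have hpow : q ^ ∑ i, ∑ j, kk i * kk j * (d i * a i j) = 1 := by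
    rw [zpow_sum_sum_eq_sq_prod_prod _ q _ hB, prod_prod_map_zpow_mul_eq_one χ g kk hrel, one_pow]
  have hinj : Function.Injective fun n : ℤ ↦ q ^ n :=
    injective_zpow_iff_not_isOfFinOrder.mpr (isOfFinOrder_iff_pow_eq_one.not.mpr hq)
  have hQ : ∑ i, ∑ j, kk i * kk j * (d i * a i j) = 0 := hinj (hpow.trans (zpow_zero q).symm)
  rw [sum_sum_eq_sum_diag_add_sum_sum_lt] at hQ
  refine Eq.trans (congrArg₂ (· + ·) ?_ ?_) hQ
  · exact sum_congr rfl fun i _ ↦ by rw [haii]; ring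
  · exact sum_congr rfl fun i _ ↦ sum_congr rfl fun j _ ↦ by rw [hda j i]; split_ifs <;> ring

/-- If `g₁^{k₁} ⋯ g_θ^{k_θ} = 1` then the quadratic form
vanishes at `(k₁, …, k_θ)`. -/
theorem stmt_17 (K : Type*) [Field K] (G : Type*) [CommGroup G] (θ : ℕ)
    (χ : Fin θ → (G →* Kˣ)) (g : Fin θ → G)
    (q : Kˣ) (hq : ¬ ∃ n : ℕ, 0 < n ∧ q ^ n = 1)
    (d : Fin θ → ℤ) (hd : ∀ i, d i ≠ 0)
    (hχg : ∀ i, χ i (g i) = q ^ d i)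
    (a : Fin θ → Fin θ → ℤ) (haii : ∀ i, a i i = 2)
    (hda : ∀ i j, d i * a i j = d j * a j i)
    (hcartan : ∀ i j, χ j (g i) * χ i (g j) = χ i (g i) ^ a i j)
    (kk : Fin θ → ℤ) (hrel : ∏ i, g i ^ kk i = 1) :
    (∑ i, 2 * kk i ^ 2 * d i) +
      (∑ i, ∑ j, if i < j then 2 * kk i * kk j * d i * a i j else 0) = 0 :=
  stmt_17_general K G θ χ g q hq d hχg a haii hda hcartan kk hrel
end

section
/- Let $B$ be a bialgebra over $k$ such that $B^{op}$ is a Hopf algebra with antipode $T$, and let $\beta : B \to k$ be an algebra homomorphism (i.e., $\beta \in G(B^o)$). Define $b \succ_\beta m = (b_{(2)} \leftharpoonup \beta) \, m \, T(b_{(1)})$ for $b, m \in B$, where $b \leftharpoonup \beta = \beta(b_{(1)}) b_{(2)}$. Then $(B, \succ_\beta, \Delta)$ is a Yetter-Drinfeld module in ${}_B\mathcal{YD}^B$: $(B, \succ_\beta)$ is a left $B$-module, $(B, \Delta)$ is a right $B$-comodule, and the compatibility $b_{(1)} \succ_\beta m_{(1)} \otimes b_{(2)} m_{(2)} = (b_{(2)}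 \succ_\beta m)_{(1)} \otimes (b_{(2)} \succ_\beta m)_{(2)} b_{(1)}$ holds for all $b, m \in B$. -/
open scoped TensorProduct

noncomputable section

variable {K : Type*} [CommRing K] {B : Type*} [Ring B] [Bialgebra K B]

/-- The map `b ↦ b ↼ β = β(b₍₁₎) b₍₂₎`. -/
def hitBeta (β : B →ₐ[K] K) : B →ₗ[K] B :=
  (TensorProduct.lid K B).toLinearMap ∘ₗ
    TensorProduct.map β.toLinearMap LinearMap.id ∘ₗ Coalgebra.comul (R := K)

/-- The generalized adjoint action `b ⊗ m ↦ b ≻_β m = (b₍₂₎ ↼ β) m T(b₍₁₎)`. -/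
def ydAct (T : B →ₗ[K] B) (β : B →ₐ[K] K) : B ⊗[K] B →ₗ[K] B :=
  LinearMap.mul' K B ∘ₗ (TensorProduct.comm K B B).toLinearMap ∘ₗ
    TensorProduct.map LinearMap.id (LinearMap.mul' K B) ∘ₗ
    (TensorProduct.assoc K B B B).toLinearMap ∘ₗ
    TensorProduct.map (TensorProduct.map T (hitBeta β)) LinearMap.id ∘ₗ
    TensorProduct.map (Coalgebra.comul (R := K)) LinearMap.id

/-- The left-hand side of the Yetter–Drinfeld compatibility:
`b ⊗ m ↦ (b₍₁₎ ≻_β m₍₁₎) ⊗ b₍₂₎ m₍₂₎`. -/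
def ydLHS (T : B →ₗ[K] B) (β : B →ₐ[K] K) : B ⊗[K] B →ₗ[K] B ⊗[K] B :=
  TensorProduct.map (ydAct T β) (LinearMap.mul' K B) ∘ₗ
    (TensorProduct.tensorTensorTensorComm K B B B B).toLinearMap ∘ₗ
    TensorProduct.map (Coalgebra.comul (R := K)) (Coalgebra.comul (R := K))

/-- The right-hand side of the Yetter–Drinfeld compatibility:
`b ⊗ m ↦ (b₍₂₎ ≻_β m)₍₁₎ ⊗ (b₍₂₎ ≻_β m)₍₂₎ b₍₁₎`. -/
def ydRHS (T : B →ₗ[K] B) (β : B →ₐ[K] K) : B ⊗[K] B →ₗ[K] B ⊗[K] B :=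
  TensorProduct.map LinearMap.id
      (LinearMap.mul' K B ∘ₗ (TensorProduct.comm K B B).toLinearMap) ∘ₗ
    (TensorProduct.leftComm K B B B).toLinearMap ∘ₗ
    TensorProduct.map LinearMap.id (Coalgebra.comul (R := K) ∘ₗ ydAct T β) ∘ₗ
    (TensorProduct.assoc K B B B).toLinearMap ∘ₗ
    TensorProduct.map (Coalgebra.comul (R := K)) LinearMap.id


namespace YD

open Coalgebra LinearMap

variable {ι ι' : Type*}
variable {M A : Type*} [AddCommMonoid M] [Module K M] [Semiring A] [Algebra K A]

/-- Workhorse: coassociativity for double sums with a linear map applied. -/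
lemma H3 (Φ : B ⊗[K] (B ⊗[K] B) →ₗ[K] M) {b : B} (r : Coalgebra.Repr K b ι)
    (rL : ∀ i, Coalgebra.Repr K (r.left i) (B × B)) (rR : ∀ i, Coalgebra.Repr K (r.right i) (B × B)) :
    ∑ i ∈ r.index, ∑ j ∈ (rL i).index,
        Φ ((rL i).left j ⊗ₜ[K] ((rL i).right j ⊗ₜ[K] r.right i)) =
    ∑ i ∈ r.index, ∑ k ∈ (rR i).index,
        Φ (r.left i ⊗ₜ[K] ((rR i).left k ⊗ₜ[K] (rR i).right k)) := by
  have h := congrArg Φ (Coalgebra.sum_tmul_tmul_eq r rL rR)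
  simpa [map_sum] using h

lemma P3 {x : B} (r : Coalgebra.Repr K x ι) :
    ∑ i ∈ r.index, Coalgebra.counit (R := K) (r.left i) • r.right i = x := by
  have h := congrArg (TensorProduct.lid K B) (Coalgebra.sum_counit_tmul_eq r)
  rw [map_sum] at h
  simp only [TensorProduct.lid_tmul] at h
  simpa using h

lemma P4 {x : B} (r : Coalgebra.Repr K x ι) :
    ∑ i ∈ r.index, Coalgebra.counit (R := K) (r.right i) • r.left i = x := by
  have h := congrArg (TensorProduct.rid K B) (Coalgebra.sum_tmul_counit_eq r)
  rw [map_sum] at h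
  simp only [TensorProduct.rid_tmul] at h
  simpa using h

/-- A representation of `comul (x * y)` from representations of `x` and `y`. -/
def mulRepr {x y : B} (rx : Coalgebra.Repr K x ι) (ry : Coalgebra.Repr K y ι') :
    Coalgebra.Repr K (x * y) (ι × ι') where
  index := rx.index ×ˢ ry.index
  left := fun p => rx.left p.1 * ry.left p.2
  right := fun p => rx.right p.1 * ry.right p.2
  eq := by
    rw [Bialgebra.comul_mul, ← rx.eq, ← ry.eq, Finset.sum_mul_sum]
    rw [Finset.sum_product]
    simp [Algebra.TensorProduct.tmul_mul_tmul]

/-- triple product map: `x ⊗ (y ⊗ z) ↦ f z * (g y * h x)` -/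
def t3 (f g h : B →ₗ[K] A) : B ⊗[K] (B ⊗[K] B) →ₗ[K] A :=
  TensorProduct.lift
    ((TensorProduct.lift.equiv (RingHom.id K) B B A).toLinearMap ∘ₗ
      ((LinearMap.llcomp K B A (B →ₗ[K] A) ((LinearMap.mul K A ∘ₗ f).flip)) ∘ₗ
        (((LinearMap.mul K A ∘ₗ g).compl₂ h).flip)))

@[simp] lemma t3_tmul (f g h : B →ₗ[K] A) (x y z : B) :
    t3 f g h (x ⊗ₜ[K] (y ⊗ₜ[K] z)) = f z * (g y * h x) := by
  simp [t3]

/-- `x ↦ x ⊗ₜ 1` -/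
def ι1 : B →ₗ[K] B ⊗[K] B := (TensorProduct.mk K B B).flip 1

/-- `x ↦ 1 ⊗ₜ x` -/
def ι2 : B →ₗ[K] B ⊗[K] B := TensorProduct.mk K B B 1

@[simp] lemma ι1_apply (x : B) : (ι1 : B →ₗ[K] B ⊗[K] B) x = x ⊗ₜ[K] 1 := rfl
@[simp] lemma ι2_apply (x : B) : (ι2 : B →ₗ[K] B ⊗[K] B) x = 1 ⊗ₜ[K] x := rfl

/-- opposite-convolution product on `Hom(B, A)`. -/
def cv (f g : B →ₗ[K] A) : B →ₗ[K] A :=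
  LinearMap.mul' K A ∘ₗ TensorProduct.map f g ∘ₗ (TensorProduct.comm K B B).toLinearMap ∘ₗ
    Coalgebra.comul (R := K)

/-- convolution unit -/
def cu : B →ₗ[K] A := Algebra.linearMap K A ∘ₗ Coalgebra.counit (R := K)

lemma cu_apply (x : B) :
    (cu : B →ₗ[K] A) x = algebraMap K A (Coalgebra.counit (R := K) x) := rfl

lemma cv_repr (f g : B →ₗ[K] A) {x : B} (r : Coalgebra.Repr K x ι) :
    cv f g x = ∑ i ∈ r.index, f (r.right i) * g (r.left i) := by
  rw [cv, LinearMap.comp_apply, LinearMap.comp_apply, LinearMap.comp_apply, ← r.eq]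
  simp [map_sum]

lemma cv_cu (f : B →ₗ[K] A) : cv f cu = f := by
  ext x
  rw [cv_repr f cu (ℛ K x)]
  calc ∑ i ∈ (ℛ K x).index, f ((ℛ K x).right i) * cu ((ℛ K x).left i)
      = f (∑ i ∈ (ℛ K x).index, Coalgebra.counit (R := K) ((ℛ K x).left i) • (ℛ K x).right i) := by
        rw [map_sum]
        refine Finset.sum_congr rfl fun i _ => ?_
        rw [cu_apply, ← Algebra.commutes, ← Algebra.smul_def, map_smul]
    _ = f x := by rw [P3]

lemma cu_cv (g : B →ₗ[K] A) : cv cu g = g := by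
  ext x
  rw [cv_repr cu g (ℛ K x)]
  calc ∑ i ∈ (ℛ K x).index, cu ((ℛ K x).right i) * g ((ℛ K x).left i)
      = g (∑ i ∈ (ℛ K x).index, Coalgebra.counit (R := K) ((ℛ K x).right i) • (ℛ K x).left i) := by
        rw [map_sum]
        refine Finset.sum_congr rfl fun i _ => ?_
        rw [cu_apply, ← Algebra.smul_def, map_smul]
    _ = g x := by rw [P4]

lemma cv_assoc (f g h : B →ₗ[K] A) : cv (cv f g) h = cv f (cv g h) := by
  ext x
  have key := H3 (t3 f g h) (ℛ K x) (fun i => ℛ K ((ℛ K x).left i))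
    (fun i => ℛ K ((ℛ K x).right i))
  simp only [t3_tmul] at key
  rw [cv_repr (cv f g) h (ℛ K x), cv_repr f (cv g h) (ℛ K x)]
  calc ∑ i ∈ (ℛ K x).index, cv f g ((ℛ K x).right i) * h ((ℛ K x).left i)
      = ∑ i ∈ (ℛ K x).index, ∑ k ∈ (ℛ K ((ℛ K x).right i)).index,
          f ((ℛ K ((ℛ K x).right i)).right k) *
            (g ((ℛ K ((ℛ K x).right i)).left k) * h ((ℛ K x).left i)) := by
        refine Finset.sum_congr rfl fun i _ => ?_
        rw [cv_repr f g (ℛ K ((ℛ K x).right i)), Finset.sum_mul]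
        simp [mul_assoc]
    _ = ∑ i ∈ (ℛ K x).index, ∑ j ∈ (ℛ K ((ℛ K x).left i)).index,
          f ((ℛ K x).right i) *
            (g ((ℛ K ((ℛ K x).left i)).right j) * h ((ℛ K ((ℛ K x).left i)).left j)) :=
        key.symm
    _ = ∑ i ∈ (ℛ K x).index, f ((ℛ K x).right i) * cv g h ((ℛ K x).left i) := by
        refine Finset.sum_congr rfl fun i _ => ?_
        rw [cv_repr g h (ℛ K ((ℛ K x).left i)), Finset.mul_sum]

section WithT

variable (T : B →ₗ[K] B) (β : B →ₐ[K] K)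

lemma P1 (hT1 : LinearMap.mul' K B ∘ₗ TensorProduct.map LinearMap.id T ∘ₗ
        (TensorProduct.comm K B B).toLinearMap ∘ₗ Coalgebra.comul (R := K) =
      Algebra.linearMap K B ∘ₗ Coalgebra.counit (R := K))
    {x : B} (r : Coalgebra.Repr K x ι) :
    ∑ i ∈ r.index, r.right i * T (r.left i)
      = algebraMap K B (Coalgebra.counit (R := K) x) := by
  have h := LinearMap.congr_fun hT1 x
  rw [LinearMap.comp_apply, LinearMap.comp_apply, LinearMap.comp_apply, ← r.eq] at h
  simpa [map_sum] using h

lemma P2 (hT2 : LinearMap.mul' K B ∘ₗ TensorProduct.map T LinearMap.id ∘ₗ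
        (TensorProduct.comm K B B).toLinearMap ∘ₗ Coalgebra.comul (R := K) =
      Algebra.linearMap K B ∘ₗ Coalgebra.counit (R := K))
    {x : B} (r : Coalgebra.Repr K x ι) :
    ∑ i ∈ r.index, T (r.right i) * r.left i
      = algebraMap K B (Coalgebra.counit (R := K) x) := by
  have h := LinearMap.congr_fun hT2 x
  rw [LinearMap.comp_apply, LinearMap.comp_apply, LinearMap.comp_apply, ← r.eq] at h
  simpa [map_sum] using h

lemma hitBeta_repr {x : B} (r : Coalgebra.Repr K x ι) :
    hitBeta β x = ∑ i ∈ r.index, β (r.left i) • r.right i := by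
  rw [hitBeta, LinearMap.comp_apply, LinearMap.comp_apply, ← r.eq]
  simp [map_sum]

lemma hitBeta_one : hitBeta β (1 : B) = 1 := by
  simp [hitBeta, Bialgebra.comul_one, Algebra.TensorProduct.one_def]

lemma ydAct_repr (m : B) {x : B} (r : Coalgebra.Repr K x ι) :
    ydAct T β (x ⊗ₜ[K] m) = ∑ i ∈ r.index, hitBeta β (r.right i) * m * T (r.left i) := by
  rw [ydAct]
  simp only [LinearMap.comp_apply, TensorProduct.map_tmul, LinearMap.id_coe, id_eq]
  rw [← r.eq, map_sum, TensorProduct.sum_tmul]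
  simp [map_sum, mul_assoc]

lemma ydLHS_tmul (x m : B) (rx : Coalgebra.Repr K x ι) (rm : Coalgebra.Repr K m ι') :
    ydLHS T β (x ⊗ₜ[K] m)
      = ∑ i ∈ rx.index, ∑ h ∈ rm.index,
          ydAct T β (rx.left i ⊗ₜ[K] rm.left h) ⊗ₜ[K] (rx.right i * rm.right h) := by
  rw [ydLHS]
  simp only [LinearMap.comp_apply, TensorProduct.map_tmul]
  rw [← rx.eq, ← rm.eq, TensorProduct.sum_tmul]
  simp only [map_sum, TensorProduct.tmul_sum]
  refine Finset.sum_congr rfl fun i _ => Finset.sum_congr rfl fun h _ => ?_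
  simp [TensorProduct.tensorTensorTensorComm_tmul]

/-- `G' T : b ↦ ∑ T(b₂) ⊗ T(b₁)`, the candidate for `Δ ∘ T`. -/
def G' : B →ₗ[K] B ⊗[K] B :=
  (TensorProduct.comm K B B).toLinearMap ∘ₗ TensorProduct.map T T ∘ₗ Coalgebra.comul (R := K)

lemma G'_repr {x : B} (r : Coalgebra.Repr K x ι) :
    G' T x = ∑ i ∈ r.index, T (r.right i) ⊗ₜ[K] T (r.left i) := by
  rw [G', LinearMap.comp_apply, LinearMap.comp_apply, ← r.eq]
  simp [map_sum]

variable
  (hT1 : LinearMap.mul' K B ∘ₗ TensorProduct.map LinearMap.id T ∘ₗ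
        (TensorProduct.comm K B B).toLinearMap ∘ₗ Coalgebra.comul (R := K) =
      Algebra.linearMap K B ∘ₗ Coalgebra.counit (R := K))
  (hT2 : LinearMap.mul' K B ∘ₗ TensorProduct.map T LinearMap.id ∘ₗ
        (TensorProduct.comm K B B).toLinearMap ∘ₗ Coalgebra.comul (R := K) =
      Algebra.linearMap K B ∘ₗ Coalgebra.counit (R := K))

include hT1 in
lemma T_one : T (1 : B) = 1 := by
  have h := LinearMap.congr_fun hT1 1
  simpa [Bialgebra.comul_one, Algebra.TensorProduct.one_def] using h

include hT1 hT2 in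
lemma T_mul_aux (x y : B) (rx : Coalgebra.Repr K x (B × B)) (ry : Coalgebra.Repr K y (B × B))
    (rxl : ∀ i, Coalgebra.Repr K (rx.left i) (B × B)) (rxr : ∀ i, Coalgebra.Repr K (rx.right i) (B × B))
    (ryl : ∀ i, Coalgebra.Repr K (ry.left i) (B × B)) (ryr : ∀ i, Coalgebra.Repr K (ry.right i) (B × B)) :
    T (x * y) = T y * T x := by
  -- the pivot quantity
  have main :
      (∑ i' ∈ ry.index, ∑ j' ∈ (ryl i').index, ∑ i ∈ rx.index, ∑ j ∈ (rxl i).index,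
        (T (ry.right i') * T (rx.right i)) *
          (((rxl i).right j * (ryl i').right j') * T ((rxl i).left j * (ryl i').left j')))
      = T (x * y) := by
    -- step 1: reassociate the x-legs via coassociativity
    have h1 : ∀ i' ∈ ry.index, ∀ j' ∈ (ryl i').index,
        (∑ i ∈ rx.index, ∑ j ∈ (rxl i).index,
          (T (ry.right i') * T (rx.right i)) *
            (((rxl i).right j * (ryl i').right j') * T ((rxl i).left j * (ryl i').left j')))
        = ∑ i ∈ rx.index, ∑ k ∈ (rxr i).index,
          (T (ry.right i') * T ((rxr i).right k)) *
            (((rxr i).left k * (ryl i').right j') * T (rx.left i * (ryl i').left j')) := by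
      intro i' _ j' _
      have h := H3 (t3 (LinearMap.mulLeft K (T (ry.right i')) ∘ₗ T)
        (LinearMap.mulRight K ((ryl i').right j'))
        (T ∘ₗ LinearMap.mulRight K ((ryl i').left j'))) rx rxl rxr
      simpa only [t3_tmul, LinearMap.comp_apply, LinearMap.mulLeft_apply,
        LinearMap.mulRight_apply] using h
    -- step 2: collapse the inner x-pair with the antipode identity
    have h2 : ∀ i' ∈ ry.index, ∀ j' ∈ (ryl i').index,
        (∑ i ∈ rx.index, ∑ k ∈ (rxr i).index,
          (T (ry.right i') * T ((rxr i).right k)) *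
            (((rxr i).left k * (ryl i').right j') * T (rx.left i * (ryl i').left j')))
        = T (ry.right i') * ((ryl i').right j' * T (x * (ryl i').left j')) := by
      intro i' _ j' _
      have e1 : ∀ i ∈ rx.index,
          (∑ k ∈ (rxr i).index,
            (T (ry.right i') * T ((rxr i).right k)) *
              (((rxr i).left k * (ryl i').right j') * T (rx.left i * (ryl i').left j')))
          = T (ry.right i') *
              (Coalgebra.counit (R := K) (rx.right i) •
                ((ryl i').right j' * T (rx.left i * (ryl i').left j'))) := by
        intro i _
        rw [Algebra.smul_def, ← P2 T hT2 (rxr i), Finset.sum_mul, Finset.mul_sum]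
        refine Finset.sum_congr rfl fun k _ => ?_
        simp only [mul_assoc]
      rw [Finset.sum_congr rfl e1, ← Finset.mul_sum]
      congr 1
      calc ∑ i ∈ rx.index,
            Coalgebra.counit (R := K) (rx.right i) •
              ((ryl i').right j' * T (rx.left i * (ryl i').left j'))
          = (ryl i').right j' *
              T ((∑ i ∈ rx.index, Coalgebra.counit (R := K) (rx.right i) • rx.left i) *
                (ryl i').left j' ) := by
            simp only [Finset.sum_mul, smul_mul_assoc, map_sum, map_smul, Finset.mul_sum,
              mul_smul_comm]
        _ = (ryl i').right j' * T (x * (ryl i').left j') := by rw [P4]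
    -- step 3: reassociate the y-legs
    have h3 :
        (∑ i' ∈ ry.index, ∑ j' ∈ (ryl i').index,
          T (ry.right i') * ((ryl i').right j' * T (x * (ryl i').left j')))
        = ∑ i' ∈ ry.index, ∑ k' ∈ (ryr i').index,
          T ((ryr i').right k') * ((ryr i').left k' * T (x * ry.left i')) := by
      have h := H3 (t3 T (LinearMap.id) (T ∘ₗ LinearMap.mulLeft K x)) ry ryl ryr
      simpa only [t3_tmul, LinearMap.comp_apply, LinearMap.mulLeft_apply,
        LinearMap.id_coe, id_eq] using h
    -- step 4: collapse the y-pair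
    have h4 :
        (∑ i' ∈ ry.index, ∑ k' ∈ (ryr i').index,
          T ((ryr i').right k') * ((ryr i').left k' * T (x * ry.left i')))
        = T (x * y) := by
      have e1 : ∀ i' ∈ ry.index,
          (∑ k' ∈ (ryr i').index,
            T ((ryr i').right k') * ((ryr i').left k' * T (x * ry.left i')))
          = Coalgebra.counit (R := K) (ry.right i') • T (x * ry.left i') := by
        intro i' _
        rw [Algebra.smul_def, ← P2 T hT2 (ryr i'), Finset.sum_mul]
        refine Finset.sum_congr rfl fun k' _ => by rw [mul_assoc]
      rw [Finset.sum_congr rfl e1]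
      calc ∑ i' ∈ ry.index,
            Coalgebra.counit (R := K) (ry.right i') • T (x * ry.left i')
          = T (x * ∑ i' ∈ ry.index,
              Coalgebra.counit (R := K) (ry.right i') • ry.left i') := by
            simp only [Finset.mul_sum, map_sum, map_smul, mul_smul_comm]
        _ = T (x * y) := by rw [P4]
    calc (∑ i' ∈ ry.index, ∑ j' ∈ (ryl i').index, ∑ i ∈ rx.index, ∑ j ∈ (rxl i).index,
          (T (ry.right i') * T (rx.right i)) *
            (((rxl i).right j * (ryl i').right j') * T ((rxl i).left j * (ryl i').left j')))
        = ∑ i' ∈ ry.index, ∑ j' ∈ (ryl i').index,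
            T (ry.right i') * ((ryl i').right j' * T (x * (ryl i').left j')) := by
          refine Finset.sum_congr rfl fun i' hi' => Finset.sum_congr rfl fun j' hj' => ?_
          rw [h1 i' hi' j' hj', h2 i' hi' j' hj']
      _ = T (x * y) := by rw [h3, h4]
  -- now evaluate the pivot the other way
  have main2 :
      (∑ i' ∈ ry.index, ∑ j' ∈ (ryl i').index, ∑ i ∈ rx.index, ∑ j ∈ (rxl i).index,
        (T (ry.right i') * T (rx.right i)) *
          (((rxl i).right j * (ryl i').right j') * T ((rxl i).left j * (ryl i').left j')))
      = T y * T x := by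
    have swap1 : ∀ i' ∈ ry.index,
        (∑ j' ∈ (ryl i').index, ∑ i ∈ rx.index, ∑ j ∈ (rxl i).index,
          (T (ry.right i') * T (rx.right i)) *
            (((rxl i).right j * (ryl i').right j') * T ((rxl i).left j * (ryl i').left j')))
        = ∑ i ∈ rx.index,
            (T (ry.right i') * T (rx.right i)) *
              algebraMap K B (Coalgebra.counit (R := K) (rx.left i) *
                Coalgebra.counit (R := K) (ry.left i')) := by
      intro i' _
      rw [Finset.sum_comm]
      refine Finset.sum_congr rfl fun i _ => ?_
      rw [Finset.sum_comm]
      have collapse :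
          (∑ j ∈ (rxl i).index, ∑ j' ∈ (ryl i').index,
            ((rxl i).right j * (ryl i').right j') * T ((rxl i).left j * (ryl i').left j'))
          = algebraMap K B (Coalgebra.counit (R := K) (rx.left i * ry.left i')) := by
        have h := P1 T hT1 (mulRepr (rxl i) (ryl i'))
        rw [mulRepr] at h
        simpa [Finset.sum_product] using h
      simp only [← Finset.mul_sum]
      rw [collapse, Bialgebra.counit_mul]
    calc (∑ i' ∈ ry.index, ∑ j' ∈ (ryl i').index, ∑ i ∈ rx.index, ∑ j ∈ (rxl i).index,
          (T (ry.right i') * T (rx.right i)) *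
            (((rxl i).right j * (ryl i').right j' * T ((rxl i).left j * (ryl i').left j'))))
        = ∑ i' ∈ ry.index, ∑ i ∈ rx.index,
            (T (ry.right i') * T (rx.right i)) *
              algebraMap K B (Coalgebra.counit (R := K) (rx.left i) *
                Coalgebra.counit (R := K) (ry.left i')) :=
          Finset.sum_congr rfl fun i' hi' => swap1 i' hi'
      _ = ∑ i' ∈ ry.index, ∑ i ∈ rx.index,
            (Coalgebra.counit (R := K) (ry.left i') • T (ry.right i')) *
              (Coalgebra.counit (R := K) (rx.left i) • T (rx.right i)) := by
          refine Finset.sum_congr rfl fun i' _ => Finset.sum_congr rfl fun i _ => ?_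
          rw [← Algebra.commutes, ← Algebra.smul_def, smul_mul_assoc, mul_smul_comm,
            smul_smul, mul_comm]
      _ = (∑ i' ∈ ry.index, Coalgebra.counit (R := K) (ry.left i') • T (ry.right i')) *
            (∑ i ∈ rx.index, Coalgebra.counit (R := K) (rx.left i) • T (rx.right i)) := by
          rw [Finset.sum_mul_sum]
      _ = T y * T x := by
          congr 1
          · calc ∑ i' ∈ ry.index, Coalgebra.counit (R := K) (ry.left i') • T (ry.right i')
                = T (∑ i' ∈ ry.index, Coalgebra.counit (R := K) (ry.left i') • ry.right i') := by
                  rw [map_sum]; simp only [map_smul]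
              _ = T y := by rw [P3]
          · calc ∑ i ∈ rx.index, Coalgebra.counit (R := K) (rx.left i) • T (rx.right i)
                = T (∑ i ∈ rx.index, Coalgebra.counit (R := K) (rx.left i) • rx.right i) := by
                  rw [map_sum]; simp only [map_smul]
              _ = T x := by rw [P3]
  rw [← main, main2]


include hT1 in
/-- The 4-leg collapse: `∑ Δ(b₂) ⋅ G'(b₁) = ε(b) 1 ⊗ 1`. -/
lemma D_lemma {x : B} (r : Coalgebra.Repr K x ι) :
    ∑ i ∈ r.index, Coalgebra.comul (R := K) (r.right i) * G' T (r.left i)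
      = algebraMap K (B ⊗[K] B) (Coalgebra.counit (R := K) x) := by
  have step1 :
      ∑ i ∈ r.index, Coalgebra.comul (R := K) (r.right i) * G' T (r.left i)
      = ∑ i ∈ r.index, ∑ j ∈ (ℛ K (r.left i)).index,
          Coalgebra.comul (R := K) (r.right i) *
            (T ((ℛ K (r.left i)).right j) ⊗ₜ[K] T ((ℛ K (r.left i)).left j)) := by
    refine Finset.sum_congr rfl fun i _ => ?_
    rw [G'_repr T (ℛ K (r.left i)), Finset.mul_sum]
  have step2 := H3 (M := B ⊗[K] B)
      (t3 (Coalgebra.comul (R := K)) (ι1 ∘ₗ T) (ι2 ∘ₗ T)) r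
      (fun i => ℛ K (r.left i)) (fun i => ℛ K (r.right i))
  simp only [t3_tmul, LinearMap.comp_apply, ι1_apply, ι2_apply,
    Algebra.TensorProduct.tmul_mul_tmul, one_mul, mul_one] at step2
  have step3 : ∀ i ∈ r.index,
      (∑ k ∈ (ℛ K (r.right i)).index,
        Coalgebra.comul (R := K) ((ℛ K (r.right i)).right k) *
          (T ((ℛ K (r.right i)).left k) ⊗ₜ[K] T (r.left i)))
      = (1 : B) ⊗ₜ[K] (r.right i * T (r.left i)) := by
    intro i _
    have e1 : ∀ k ∈ (ℛ K (r.right i)).index,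
        Coalgebra.comul (R := K) ((ℛ K (r.right i)).right k) *
          (T ((ℛ K (r.right i)).left k) ⊗ₜ[K] T (r.left i))
        = ∑ n ∈ (ℛ K ((ℛ K (r.right i)).right k)).index,
            ((ℛ K ((ℛ K (r.right i)).right k)).left n * T ((ℛ K (r.right i)).left k)) ⊗ₜ[K]
              ((ℛ K ((ℛ K (r.right i)).right k)).right n * T (r.left i)) := by
      intro k _
      rw [← (ℛ K ((ℛ K (r.right i)).right k)).eq, Finset.sum_mul]
      simp [Algebra.TensorProduct.tmul_mul_tmul]
    rw [Finset.sum_congr rfl e1]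
    have h := H3 (M := B ⊗[K] B)
        (t3 (ι2 ∘ₗ LinearMap.mulRight K (T (r.left i))) ι1 (ι1 ∘ₗ T)) (ℛ K (r.right i))
        (fun k => ℛ K ((ℛ K (r.right i)).left k))
        (fun k => ℛ K ((ℛ K (r.right i)).right k))
    simp only [t3_tmul, LinearMap.comp_apply, ι1_apply, ι2_apply,
      LinearMap.mulRight_apply, Algebra.TensorProduct.tmul_mul_tmul, one_mul, mul_one] at h
    rw [← h]
    have e2 : ∀ k ∈ (ℛ K (r.right i)).index,
        (∑ n ∈ (ℛ K ((ℛ K (r.right i)).left k)).index,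
          ((ℛ K ((ℛ K (r.right i)).left k)).right n *
              T ((ℛ K ((ℛ K (r.right i)).left k)).left n)) ⊗ₜ[K]
            ((ℛ K (r.right i)).right k * T (r.left i)))
        = Coalgebra.counit (R := K) ((ℛ K (r.right i)).left k) •
            ((1 : B) ⊗ₜ[K] ((ℛ K (r.right i)).right k * T (r.left i))) := by
      intro k _
      rw [← TensorProduct.sum_tmul, P1 T hT1, Algebra.algebraMap_eq_smul_one,
        TensorProduct.smul_tmul']
    rw [Finset.sum_congr rfl e2]
    calc ∑ k ∈ (ℛ K (r.right i)).index,
          Coalgebra.counit (R := K) ((ℛ K (r.right i)).left k) •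
            ((1 : B) ⊗ₜ[K] ((ℛ K (r.right i)).right k * T (r.left i)))
        = (1 : B) ⊗ₜ[K] ((∑ k ∈ (ℛ K (r.right i)).index,
            Coalgebra.counit (R := K) ((ℛ K (r.right i)).left k) •
              (ℛ K (r.right i)).right k) * T (r.left i)) := by
          rw [Finset.sum_mul, TensorProduct.tmul_sum]
          refine Finset.sum_congr rfl fun k _ => ?_
          rw [smul_mul_assoc, TensorProduct.tmul_smul]
      _ = (1 : B) ⊗ₜ[K] (r.right i * T (r.left i)) := by rw [P3]
  calc ∑ i ∈ r.index, Coalgebra.comul (R := K) (r.right i) * G' T (r.left i)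
      = ∑ i ∈ r.index, (1 : B) ⊗ₜ[K] (r.right i * T (r.left i)) := by
        rw [step1, step2, Finset.sum_congr rfl step3]
    _ = (1 : B) ⊗ₜ[K] (∑ i ∈ r.index, r.right i * T (r.left i)) := by
        rw [TensorProduct.tmul_sum]
    _ = algebraMap K (B ⊗[K] B) (Coalgebra.counit (R := K) x) := by
        rw [P1 T hT1 r]
        simp [Algebra.algebraMap_eq_smul_one, Algebra.TensorProduct.one_def]

include hT1 hT2 in
/-- `Δ ∘ T = G' T` : the antipode of `Bᵒᵖ` is anti-comultiplicative. -/
lemma comul_T (x : B) : Coalgebra.comul (R := K) (T x) = G' T x := by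
  have step2 := H3 (M := B ⊗[K] B)
      (t3 (Coalgebra.comul (R := K) ∘ₗ T) (Coalgebra.comul (R := K)) (G' T)) (ℛ K x)
      (fun i => ℛ K ((ℛ K x).left i)) (fun i => ℛ K ((ℛ K x).right i))
  simp only [t3_tmul, LinearMap.comp_apply] at step2
  -- evaluate the left-hand form: collapse via `D_lemma`
  have lhs_eval : ∀ i ∈ (ℛ K x).index,
      (∑ j ∈ (ℛ K ((ℛ K x).left i)).index,
        Coalgebra.comul (R := K) (T ((ℛ K x).right i)) *
          (Coalgebra.comul (R := K) ((ℛ K ((ℛ K x).left i)).right j) *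
            G' T ((ℛ K ((ℛ K x).left i)).left j)))
      = Coalgebra.counit (R := K) ((ℛ K x).left i) •
          Coalgebra.comul (R := K) (T ((ℛ K x).right i)) := by
    intro i _
    rw [← Finset.mul_sum, D_lemma T hT1 (ℛ K ((ℛ K x).left i)),
      ← Algebra.commutes, ← Algebra.smul_def]
  -- evaluate the right-hand form: collapse via the antipode identity
  have rhs_eval : ∀ i ∈ (ℛ K x).index,
      (∑ k ∈ (ℛ K ((ℛ K x).right i)).index,
        Coalgebra.comul (R := K) (T ((ℛ K ((ℛ K x).right i)).right k)) *
          (Coalgebra.comul (R := K) ((ℛ K ((ℛ K x).right i)).left k) *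
            G' T ((ℛ K x).left i)))
      = Coalgebra.counit (R := K) ((ℛ K x).right i) • G' T ((ℛ K x).left i) := by
    intro i _
    have e1 : ∀ k ∈ (ℛ K ((ℛ K x).right i)).index,
        Coalgebra.comul (R := K) (T ((ℛ K ((ℛ K x).right i)).right k)) *
          (Coalgebra.comul (R := K) ((ℛ K ((ℛ K x).right i)).left k) *
            G' T ((ℛ K x).left i))
        = Coalgebra.comul (R := K)
            (T ((ℛ K ((ℛ K x).right i)).right k) * (ℛ K ((ℛ K x).right i)).left k) *
            G' T ((ℛ K x).left i) := by
      intro k _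
      rw [← mul_assoc, ← Bialgebra.comul_mul]
    rw [Finset.sum_congr rfl e1, ← Finset.sum_mul, ← map_sum,
      P2 T hT2 (ℛ K ((ℛ K x).right i)), Bialgebra.comul_algebraMap,
      ← Algebra.smul_def]
  -- combine
  have w1 : ∑ i ∈ (ℛ K x).index,
      Coalgebra.counit (R := K) ((ℛ K x).left i) •
        Coalgebra.comul (R := K) (T ((ℛ K x).right i))
      = Coalgebra.comul (R := K) (T x) := by
    calc ∑ i ∈ (ℛ K x).index,
          Coalgebra.counit (R := K) ((ℛ K x).left i) •
            Coalgebra.comul (R := K) (T ((ℛ K x).right i))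
        = Coalgebra.comul (R := K) (T (∑ i ∈ (ℛ K x).index,
            Coalgebra.counit (R := K) ((ℛ K x).left i) • (ℛ K x).right i)) := by
          simp only [map_sum, map_smul]
      _ = Coalgebra.comul (R := K) (T x) := by rw [P3]
  have w2 : ∑ i ∈ (ℛ K x).index,
      Coalgebra.counit (R := K) ((ℛ K x).right i) • G' T ((ℛ K x).left i)
      = G' T x := by
    calc ∑ i ∈ (ℛ K x).index,
          Coalgebra.counit (R := K) ((ℛ K x).right i) • G' T ((ℛ K x).left i)
        = G' T (∑ i ∈ (ℛ K x).index,
            Coalgebra.counit (R := K) ((ℛ K x).right i) • (ℛ K x).left i) := by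
          simp only [map_sum, map_smul]
      _ = G' T x := by rw [P4]
  calc Coalgebra.comul (R := K) (T x)
      = ∑ i ∈ (ℛ K x).index,
          Coalgebra.counit (R := K) ((ℛ K x).left i) •
            Coalgebra.comul (R := K) (T ((ℛ K x).right i)) := w1.symm
    _ = ∑ i ∈ (ℛ K x).index, ∑ j ∈ (ℛ K ((ℛ K x).left i)).index,
          Coalgebra.comul (R := K) (T ((ℛ K x).right i)) *
            (Coalgebra.comul (R := K) ((ℛ K ((ℛ K x).left i)).right j) *
              G' T ((ℛ K ((ℛ K x).left i)).left j)) :=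
        (Finset.sum_congr rfl lhs_eval).symm
    _ = ∑ i ∈ (ℛ K x).index, ∑ k ∈ (ℛ K ((ℛ K x).right i)).index,
          Coalgebra.comul (R := K) (T ((ℛ K ((ℛ K x).right i)).right k)) *
            (Coalgebra.comul (R := K) ((ℛ K ((ℛ K x).right i)).left k) *
              G' T ((ℛ K x).left i)) := step2
    _ = ∑ i ∈ (ℛ K x).index,
          Coalgebra.counit (R := K) ((ℛ K x).right i) • G' T ((ℛ K x).left i) :=
        Finset.sum_congr rfl rhs_eval
    _ = G' T x := w2



include hT1 hT2 in
lemma T_mul (x y : B) : T (x * y) = T y * T x :=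
  T_mul_aux T hT1 hT2 x y (ℛ K x) (ℛ K y)
    (fun i => ℛ K ((ℛ K x).left i)) (fun i => ℛ K ((ℛ K x).right i))
    (fun i => ℛ K ((ℛ K y).left i)) (fun i => ℛ K ((ℛ K y).right i))

include hT1 in
lemma act_one (m : B) : ydAct T β ((1 : B) ⊗ₜ[K] m) = m := by
  simp [ydAct, Bialgebra.comul_one, Algebra.TensorProduct.one_def, hitBeta_one,
    T_one T hT1]

lemma hitBeta_mul (x y : B) :
    hitBeta β (x * y) = hitBeta β x * hitBeta β y := by
  have h := hitBeta_repr β (mulRepr (ℛ K x) (ℛ K y))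
  rw [mulRepr] at h
  simp only [Finset.sum_product] at h
  rw [h, hitBeta_repr β (ℛ K x), hitBeta_repr β (ℛ K y), Finset.sum_mul_sum]
  refine Finset.sum_congr rfl fun i _ => Finset.sum_congr rfl fun j _ => ?_
  simp only [map_mul, smul_mul_assoc, mul_smul_comm, smul_smul]
  rw [mul_comm (β ((ℛ K x).left i))]

include hT1 hT2 in
lemma act_mul (b b' m : B) :
    ydAct T β ((b * b') ⊗ₜ[K] m) = ydAct T β (b ⊗ₜ[K] ydAct T β (b' ⊗ₜ[K] m)) := by
  have h := ydAct_repr T β m (mulRepr (ℛ K b) (ℛ K b'))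
  rw [mulRepr] at h
  simp only [Finset.sum_product] at h
  rw [h, ydAct_repr T β _ (ℛ K b), ydAct_repr T β m (ℛ K b')]
  refine Finset.sum_congr rfl fun i _ => ?_
  rw [Finset.mul_sum, Finset.sum_mul]
  refine Finset.sum_congr rfl fun j _ => ?_
  rw [hitBeta_mul β, T_mul T hT1 hT2]
  simp only [mul_assoc]

include hT2 in
lemma cv_inv1 : cv (ι2 ∘ₗ T) (ι2 : B →ₗ[K] B ⊗[K] B) = cu := by
  ext x
  rw [cv_repr _ _ (ℛ K x)]
  calc ∑ i ∈ (ℛ K x).index,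
        (ι2 ∘ₗ T) ((ℛ K x).right i) * (ι2 : B →ₗ[K] B ⊗[K] B) ((ℛ K x).left i)
      = (1 : B) ⊗ₜ[K] (∑ i ∈ (ℛ K x).index, T ((ℛ K x).right i) * (ℛ K x).left i) := by
        rw [TensorProduct.tmul_sum]
        refine Finset.sum_congr rfl fun i _ => ?_
        simp [Algebra.TensorProduct.tmul_mul_tmul]
    _ = (cu : B →ₗ[K] B ⊗[K] B) x := by
        rw [P2 T hT2 (ℛ K x), cu_apply]
        simp [Algebra.algebraMap_eq_smul_one, Algebra.TensorProduct.one_def]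

include hT1 hT2 in
lemma KEY_aux (m b : B) (rm : Coalgebra.Repr K m (B × B)) (r : Coalgebra.Repr K b (B × B))
    (rL : ∀ i, Coalgebra.Repr K (r.left i) (B × B)) (rR : ∀ i, Coalgebra.Repr K (r.right i) (B × B))
    (rLL : ∀ i j, Coalgebra.Repr K ((rL i).left j) (B × B))
    (rLR : ∀ i j, Coalgebra.Repr K ((rL i).right j) (B × B))
    (rRL : ∀ i k, Coalgebra.Repr K ((rR i).left k) (B × B))
    (rRR : ∀ i k, Coalgebra.Repr K ((rR i).right k) (B × B)) :
    ∑ i ∈ r.index, ydLHS T β (r.right i ⊗ₜ[K] m) * ((1 : B) ⊗ₜ[K] T (r.left i))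
      = Coalgebra.comul (R := K) (ydAct T β (b ⊗ₜ[K] m)) := by
  -- Stage 1: expand `ydLHS`
  have s01 : ∑ i ∈ r.index, ydLHS T β (r.right i ⊗ₜ[K] m) * ((1 : B) ⊗ₜ[K] T (r.left i))
      = ∑ i ∈ r.index, ∑ k ∈ (rR i).index, ∑ h ∈ rm.index,
          ydAct T β ((rR i).left k ⊗ₜ[K] rm.left h) ⊗ₜ[K]
            ((rR i).right k * (rm.right h * T (r.left i))) := by
    refine Finset.sum_congr rfl fun i _ => ?_
    rw [ydLHS_tmul T β _ m (rR i) rm, Finset.sum_mul]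
    refine Finset.sum_congr rfl fun k _ => ?_
    rw [Finset.sum_mul]
    refine Finset.sum_congr rfl fun h _ => ?_
    simp [Algebra.TensorProduct.tmul_mul_tmul, mul_assoc]
  -- move M1: shift the top-level split
  have hM1 := H3 (M := B ⊗[K] B)
      (∑ h ∈ rm.index, t3 (ι2 ∘ₗ LinearMap.mulRight K (rm.right h))
        (ι1 ∘ₗ (ydAct T β ∘ₗ (TensorProduct.mk K B B).flip (rm.left h)))
        (ι2 ∘ₗ T)) r rL rR
  simp only [LinearMap.coe_sum, Finset.sum_apply, t3_tmul, LinearMap.comp_apply,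
    ι1_apply, ι2_apply, LinearMap.mulRight_apply, LinearMap.flip_apply,
    TensorProduct.mk_apply, Algebra.TensorProduct.tmul_mul_tmul, one_mul, mul_one,
    mul_assoc] at hM1
  -- Stage 2 → Stage 3 : expand the action, swap sums
  have s23 : ∀ i ∈ r.index,
      (∑ j ∈ (rL i).index, ∑ h ∈ rm.index,
        ydAct T β ((rL i).right j ⊗ₜ[K] rm.left h) ⊗ₜ[K]
          (r.right i * (rm.right h * T ((rL i).left j))))
      = ∑ j ∈ (rL i).index, ∑ n ∈ (rLR i j).index, ∑ h ∈ rm.index,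
          (hitBeta β ((rLR i j).right n) * (rm.left h * T ((rLR i j).left n))) ⊗ₜ[K]
            (r.right i * (rm.right h * T ((rL i).left j))) := by
    intro i _
    refine Finset.sum_congr rfl fun j _ => ?_
    rw [Finset.sum_comm]
    refine Finset.sum_congr rfl fun h _ => ?_
    rw [ydAct_repr T β _ (rLR i j), TensorProduct.sum_tmul]
    refine Finset.sum_congr rfl fun n _ => ?_
    rw [mul_assoc]
  -- move M2: shift the split inside the left part
  have hM2 : ∀ i ∈ r.index,
      (∑ j ∈ (rL i).index, ∑ n ∈ (rLR i j).index, ∑ h ∈ rm.index,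
        (hitBeta β ((rLR i j).right n) * (rm.left h * T ((rLR i j).left n))) ⊗ₜ[K]
          (r.right i * (rm.right h * T ((rL i).left j))))
      = ∑ j ∈ (rL i).index, ∑ n ∈ (rLL i j).index, ∑ h ∈ rm.index,
          (hitBeta β ((rL i).right j) * (rm.left h * T ((rLL i j).right n))) ⊗ₜ[K]
            (r.right i * (rm.right h * T ((rLL i j).left n))) := by
    intro i _
    have h := H3 (M := B ⊗[K] B)
        (∑ h ∈ rm.index, t3 (ι1 ∘ₗ hitBeta β)
          (ι1 ∘ₗ LinearMap.mulLeft K (rm.left h) ∘ₗ T)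
          (ι2 ∘ₗ LinearMap.mulLeft K (r.right i) ∘ₗ LinearMap.mulLeft K (rm.right h) ∘ₗ T))
        (rL i) (rLL i) (rLR i)
    simp only [LinearMap.coe_sum, Finset.sum_apply, t3_tmul, LinearMap.comp_apply,
      ι1_apply, ι2_apply, LinearMap.mulLeft_apply,
      Algebra.TensorProduct.tmul_mul_tmul, one_mul, mul_one] at h
    exact h.symm
  -- Stage 4 → Stage 5: swap sums, fold the inner pair into `G'`, reshape
  have s45 : ∀ i ∈ r.index,
      (∑ j ∈ (rL i).index, ∑ n ∈ (rLL i j).index, ∑ h ∈ rm.index,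
        (hitBeta β ((rL i).right j) * (rm.left h * T ((rLL i j).right n))) ⊗ₜ[K]
          (r.right i * (rm.right h * T ((rLL i j).left n))))
      = ∑ j ∈ (rL i).index, ∑ h ∈ rm.index,
          ((1 : B) ⊗ₜ[K] (r.right i * rm.right h)) *
            (((hitBeta β ((rL i).right j) * rm.left h) ⊗ₜ[K] (1 : B)) *
              G' T ((rL i).left j)) := by
    intro i _
    refine Finset.sum_congr rfl fun j _ => ?_
    rw [Finset.sum_comm]
    refine Finset.sum_congr rfl fun h _ => ?_
    rw [G'_repr T (rLL i j), Finset.mul_sum, Finset.mul_sum]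
    refine Finset.sum_congr rfl fun n _ => ?_
    simp only [Algebra.TensorProduct.tmul_mul_tmul, one_mul, mul_one, mul_assoc]
  -- move M3: shift the top-level split back to the right
  have hM3 := H3 (M := B ⊗[K] B)
      (∑ h ∈ rm.index, t3 (ι2 ∘ₗ LinearMap.mulRight K (rm.right h))
        (ι1 ∘ₗ LinearMap.mulRight K (rm.left h) ∘ₗ hitBeta β)
        (G' T)) r rL rR
  simp only [LinearMap.coe_sum, Finset.sum_apply, t3_tmul, LinearMap.comp_apply,
    ι1_apply, ι2_apply, LinearMap.mulRight_apply] at hM3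
  -- Stage 6 → Stage 7: expand `hitBeta`, reshape for the last move
  have s67 : ∀ i ∈ r.index,
      (∑ k ∈ (rR i).index, ∑ h ∈ rm.index,
        ((1 : B) ⊗ₜ[K] ((rR i).right k * rm.right h)) *
          (((hitBeta β ((rR i).left k) * rm.left h) ⊗ₜ[K] (1 : B)) * G' T (r.left i)))
      = ∑ k ∈ (rR i).index, ∑ n ∈ (rRL i k).index, ∑ h ∈ rm.index,
          (((1 : B) ⊗ₜ[K] ((rR i).right k * rm.right h)) *
            ((((rRL i k).right n * rm.left h) ⊗ₜ[K] (1 : B)) *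
              algebraMap K (B ⊗[K] B) (β ((rRL i k).left n)))) * G' T (r.left i) := by
    intro i _
    refine Finset.sum_congr rfl fun k _ => ?_
    rw [Finset.sum_comm]
    refine Finset.sum_congr rfl fun h _ => ?_
    rw [hitBeta_repr β (rRL i k), Finset.sum_mul, TensorProduct.sum_tmul,
      Finset.sum_mul, Finset.mul_sum]
    refine Finset.sum_congr rfl fun n _ => ?_
    simp only [Algebra.algebraMap_eq_smul_one, smul_mul_assoc, TensorProduct.smul_tmul',
      mul_smul_comm, mul_one, one_mul, mul_assoc]
  -- move M4: shift the split inside the right part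
  have hM4 : ∀ i ∈ r.index,
      (∑ k ∈ (rR i).index, ∑ n ∈ (rRL i k).index, ∑ h ∈ rm.index,
        (((1 : B) ⊗ₜ[K] ((rR i).right k * rm.right h)) *
          ((((rRL i k).right n * rm.left h) ⊗ₜ[K] (1 : B)) *
            algebraMap K (B ⊗[K] B) (β ((rRL i k).left n)))) * G' T (r.left i))
      = ∑ k ∈ (rR i).index, ∑ n ∈ (rRR i k).index, ∑ h ∈ rm.index,
          (((1 : B) ⊗ₜ[K] ((rRR i k).right n * rm.right h)) *
            ((((rRR i k).left n * rm.left h) ⊗ₜ[K] (1 : B)) *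
              algebraMap K (B ⊗[K] B) (β ((rR i).left k)))) * G' T (r.left i) := by
    intro i _
    have h := H3 (M := B ⊗[K] B)
        (LinearMap.mulRight K (G' T (r.left i)) ∘ₗ
          (∑ h ∈ rm.index, t3 (ι2 ∘ₗ LinearMap.mulRight K (rm.right h))
            (ι1 ∘ₗ LinearMap.mulRight K (rm.left h))
            (Algebra.linearMap K (B ⊗[K] B) ∘ₗ β.toLinearMap)))
        (rR i) (rRL i) (rRR i)
    simp only [LinearMap.coe_sum, Finset.sum_apply, t3_tmul, LinearMap.comp_apply,
      ι1_apply, ι2_apply, LinearMap.mulRight_apply, Algebra.linearMap_apply,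
      AlgHom.toLinearMap_apply, Finset.sum_mul] at h
    exact h
  -- the target, expanded
  have tgt : Coalgebra.comul (R := K) (ydAct T β (b ⊗ₜ[K] m))
      = ∑ i ∈ r.index, ∑ k ∈ (rR i).index, ∑ n ∈ (rRR i k).index, ∑ h ∈ rm.index,
          (((1 : B) ⊗ₜ[K] ((rRR i k).right n * rm.right h)) *
            ((((rRR i k).left n * rm.left h) ⊗ₜ[K] (1 : B)) *
              algebraMap K (B ⊗[K] B) (β ((rR i).left k)))) * G' T (r.left i) := by
    rw [ydAct_repr T β m r, map_sum]
    refine Finset.sum_congr rfl fun i _ => ?_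
    rw [Bialgebra.comul_mul, Bialgebra.comul_mul, comul_T T hT1 hT2,
      hitBeta_repr β (rR i), map_sum]
    simp only [map_smul]
    rw [Finset.sum_mul, Finset.sum_mul]
    refine Finset.sum_congr rfl fun k _ => ?_
    rw [← (rRR i k).eq, ← rm.eq]
    rw [Finset.smul_sum, Finset.sum_mul, Finset.sum_mul]
    refine Finset.sum_congr rfl fun n _ => ?_
    rw [Finset.mul_sum, Finset.sum_mul]
    refine Finset.sum_congr rfl fun h _ => ?_
    simp only [Algebra.algebraMap_eq_smul_one, Algebra.TensorProduct.tmul_mul_tmul,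
      one_mul, mul_one, mul_smul_comm, smul_mul_assoc, mul_assoc]
  -- assemble
  calc ∑ i ∈ r.index, ydLHS T β (r.right i ⊗ₜ[K] m) * ((1 : B) ⊗ₜ[K] T (r.left i))
      = ∑ i ∈ r.index, ∑ k ∈ (rR i).index, ∑ h ∈ rm.index,
          ydAct T β ((rR i).left k ⊗ₜ[K] rm.left h) ⊗ₜ[K]
            ((rR i).right k * (rm.right h * T (r.left i))) := s01
    _ = ∑ i ∈ r.index, ∑ j ∈ (rL i).index, ∑ h ∈ rm.index,
          ydAct T β ((rL i).right j ⊗ₜ[K] rm.left h) ⊗ₜ[K]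
            (r.right i * (rm.right h * T ((rL i).left j))) := hM1.symm
    _ = ∑ i ∈ r.index, ∑ j ∈ (rL i).index, ∑ h ∈ rm.index,
          ((1 : B) ⊗ₜ[K] (r.right i * rm.right h)) *
            (((hitBeta β ((rL i).right j) * rm.left h) ⊗ₜ[K] (1 : B)) *
              G' T ((rL i).left j)) := by
        refine Finset.sum_congr rfl fun i hi => ?_
        rw [s23 i hi, hM2 i hi, s45 i hi]
    _ = ∑ i ∈ r.index, ∑ k ∈ (rR i).index, ∑ h ∈ rm.index,
          ((1 : B) ⊗ₜ[K] ((rR i).right k * rm.right h)) *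
            (((hitBeta β ((rR i).left k) * rm.left h) ⊗ₜ[K] (1 : B)) *
              G' T (r.left i)) := hM3
    _ = ∑ i ∈ r.index, ∑ k ∈ (rR i).index, ∑ n ∈ (rRR i k).index, ∑ h ∈ rm.index,
          (((1 : B) ⊗ₜ[K] ((rRR i k).right n * rm.right h)) *
            ((((rRR i k).left n * rm.left h) ⊗ₜ[K] (1 : B)) *
              algebraMap K (B ⊗[K] B) (β ((rR i).left k)))) * G' T (r.left i) := by
        refine Finset.sum_congr rfl fun i hi => ?_
        rw [s67 i hi, hM4 i hi]
    _ = Coalgebra.comul (R := K) (ydAct T β (b ⊗ₜ[K] m)) := tgt.symm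

include hT1 hT2 in
lemma KEY (m : B) :
    cv (ydLHS T β ∘ₗ (TensorProduct.mk K B B).flip m) (ι2 ∘ₗ T)
      = Coalgebra.comul (R := K) ∘ₗ (ydAct T β ∘ₗ (TensorProduct.mk K B B).flip m) := by
  ext b
  rw [LinearMap.comp_apply, LinearMap.comp_apply, cv_repr _ _ (ℛ K b)]
  have := KEY_aux T β hT1 hT2 m b (ℛ K m) (ℛ K b)
    (fun i => ℛ K ((ℛ K b).left i)) (fun i => ℛ K ((ℛ K b).right i))
    (fun i j => ℛ K ((ℛ K ((ℛ K b).left i)).left j))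
    (fun i j => ℛ K ((ℛ K ((ℛ K b).left i)).right j))
    (fun i k => ℛ K ((ℛ K ((ℛ K b).right i)).left k))
    (fun i k => ℛ K ((ℛ K ((ℛ K b).right i)).right k))
  simpa using this

lemma ydRHS_cv (b m : B) :
    ydRHS T β (b ⊗ₜ[K] m)
      = cv (Coalgebra.comul (R := K) ∘ₗ (ydAct T β ∘ₗ (TensorProduct.mk K B B).flip m))
          (ι2 : B →ₗ[K] B ⊗[K] B) b := by
  rw [cv_repr _ _ (ℛ K b), ydRHS]
  simp only [LinearMap.comp_apply, TensorProduct.map_tmul, LinearMap.id_coe, id_eq]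
  rw [← (ℛ K b).eq, TensorProduct.sum_tmul, map_sum, map_sum, map_sum, map_sum]
  refine Finset.sum_congr rfl fun i _ => ?_
  rw [LinearMap.flip_apply, TensorProduct.mk_apply]
  simp only [LinearEquiv.coe_coe, TensorProduct.assoc_tmul, TensorProduct.map_tmul,
    LinearMap.comp_apply, LinearMap.id_coe, id_eq]
  rw [← (ℛ K (ydAct T β ((ℛ K b).right i ⊗ₜ[K] m))).eq, TensorProduct.tmul_sum,
    map_sum, map_sum, Finset.sum_mul]
  refine Finset.sum_congr rfl fun k _ => ?_
  simp [TensorProduct.leftComm_tmul, Algebra.TensorProduct.tmul_mul_tmul]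

end WithT

end YD

/-- `(B, ≻_β, Δ)` is a Yetter–Drinfeld module in `{}_B𝒴𝒟^B` when
`B^{op}` is a Hopf algebra with antipode `T` and `β ∈ G(B°)`. -/
theorem stmt_18 (T : B →ₗ[K] B)
    (hT1 : LinearMap.mul' K B ∘ₗ TensorProduct.map LinearMap.id T ∘ₗ
        (TensorProduct.comm K B B).toLinearMap ∘ₗ Coalgebra.comul (R := K) =
      Algebra.linearMap K B ∘ₗ Coalgebra.counit (R := K))
    (hT2 : LinearMap.mul' K B ∘ₗ TensorProduct.map T LinearMap.id ∘ₗ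
        (TensorProduct.comm K B B).toLinearMap ∘ₗ Coalgebra.comul (R := K) =
      Algebra.linearMap K B ∘ₗ Coalgebra.counit (R := K))
    (β : B →ₐ[K] K) :
    -- `(B, ≻_β)` is a left `B`-module:
    (∀ m : B, ydAct T β ((1 : B) ⊗ₜ[K] m) = m) ∧
    (∀ b b' m : B,
      ydAct T β ((b * b') ⊗ₜ[K] m) = ydAct T β (b ⊗ₜ[K] ydAct T β (b' ⊗ₜ[K] m))) ∧
    -- `(B, Δ)` is a right `B`-comodule:
    ((TensorProduct.rid K B).toLinearMap ∘ₗ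
        TensorProduct.map LinearMap.id (Coalgebra.counit (R := K)) ∘ₗ
        Coalgebra.comul (R := K) = (LinearMap.id : B →ₗ[K] B)) ∧
    (TensorProduct.map LinearMap.id (Coalgebra.comul (R := K)) ∘ₗ
        Coalgebra.comul (R := K) =
      (TensorProduct.assoc K B B B).toLinearMap ∘ₗ
        TensorProduct.map (Coalgebra.comul (R := K)) LinearMap.id ∘ₗ
        Coalgebra.comul (R := K)) ∧
    -- the Yetter–Drinfeld compatibility condition:
    (∀ b m : B, ydLHS T β (b ⊗ₜ[K] m) = ydRHS T β (b ⊗ₜ[K] m)) := by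
  refine ⟨fun m => YD.act_one T β hT1 m, fun b b' m => YD.act_mul T β hT1 hT2 b b' m,
    ?_, Coalgebra.coassoc.symm, fun b m => ?_⟩
  · ext b
    simp only [LinearMap.comp_apply, LinearMap.id_coe, id_eq, LinearEquiv.coe_coe]
    rw [show TensorProduct.map (LinearMap.id) (Coalgebra.counit (R := K))
        = LinearMap.lTensor B (Coalgebra.counit (R := K)) from rfl,
      Coalgebra.lTensor_counit_comul]
    simp
  · rw [YD.ydRHS_cv T β b m, ← YD.KEY T β hT1 hT2 m, YD.cv_assoc,
      YD.cv_inv1 T hT2, YD.cv_cu]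
    rfl
end
end
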